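/- arXiv:1605.03524 — 6 statements merged into one kernel-verified Lean document; each statement's English description precedes it below -/
import Mathlib

section
/- For every integer n ≥ 1, the total number of antichains in the doubled root poset of type A_n equals the central binomial coefficient C(2n, n). -/
/-- An element of the doubled root poset of type Aₙ: a triple `(i, j, b)` where `[i,j]`
(with `1 ≤ i ≤ j ≤ n`) is a positive root of type Aₙ (an interval), and `b` records whether
the element lies in the top copy (`true`) or the bottom copy (`false`) of the root poset.
Simple roots (`i = j`) are glued, and by convention carry `b = true`. -/
def DRootA (n : ℕ) : Type :=
  {x : ℕ × ℕ × Bool // 1 ≤ x.1 ∧ x.1 ≤ x.2.1 ∧ x.2.1 ≤ n ∧ (x.1 = x.2.1 → x.2.2 = true)}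

/-- The order relation on the doubled root poset of type Aₙ.  Top elements are ordered as in
the root poset (inclusion of intervals), bottom elements are ordered dually, and a bottom
element lies below a top element exactly when some simple root lies below both in the root
poset (for a top element that is simple this is the same as saying that the simple root lies
below the bottom element in the root poset). -/
def dleA (n : ℕ) (x y : DRootA n) : Prop :=
  (x.1.2.2 = true ∧ y.1.2.2 = true ∧ y.1.1 ≤ x.1.1 ∧ x.1.2.1 ≤ y.1.2.1) ∨
  (x.1.2.2 = false ∧ y.1.2.2 = false ∧ x.1.1 ≤ y.1.1 ∧ y.1.2.1 ≤ x.1.2.1) ∨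
  (x.1.2.2 = false ∧ y.1.2.2 = true ∧
    ∃ m : ℕ, 1 ≤ m ∧ m ≤ n ∧ x.1.1 ≤ m ∧ m ≤ x.1.2.1 ∧ y.1.1 ≤ m ∧ m ≤ y.1.2.1)

/-!
Read a top root `[i, j]` as the pair `(i, j)` and a bottom root `[i, j]` as `(j, i)`. This
identifies the doubled root poset of type Aₙ with `[1, n] × [1, n]`, and two distinct elements
are incomparable exactly when one pair is below the other in both coordinates strictly. So
antichains are chains for this strict product order. Such a chain is determined by its two
projections, which can be any two subsets of `[1, n]` of equal size, and there are
`∑ₖ C(n, k)² = C(2n, n)` of those.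
-/

open Finset

section StrongChain

variable {α β : Type*}

/-- Unlike the product order `<`, both coordinates must increase strictly. -/
def Prod.StrongLT [LT α] [LT β] (p q : α × β) : Prop := p.1 < q.1 ∧ p.2 < q.2

variable [LinearOrder α] [LinearOrder β]

def Finset.matchByRank (X : Finset α) (Y : Finset β) {k : ℕ} (hX : #X = k) (hY : #Y = k) :
    Finset (α × β) :=
  univ.image fun t => (X.orderEmbOfFin hX t, Y.orderEmbOfFin hY t)

theorem Finset.isChain_matchByRank (X : Finset α) (Y : Finset β) {k : ℕ} (hX : #X = k)
    (hY : #Y = k) : IsChain Prod.StrongLT (X.matchByRank Y hX hY : Set (α × β)) := by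
  simp only [IsChain, matchByRank, coe_image, coe_univ, Set.image_univ]
  rintro _ ⟨s, rfl⟩ _ ⟨t, rfl⟩ hst
  have hst : s ≠ t := by rintro rfl; exact hst rfl
  rcases lt_or_gt_of_ne hst with h | h
  · exact .inl ⟨(X.orderEmbOfFin hX).strictMono h, (Y.orderEmbOfFin hY).strictMono h⟩
  · exact .inr ⟨(X.orderEmbOfFin hX).strictMono h, (Y.orderEmbOfFin hY).strictMono h⟩

theorem Finset.image_fst_matchByRank (X : Finset α) (Y : Finset β) {k : ℕ} (hX : #X = k)
    (hY : #Y = k) : (X.matchByRank Y hX hY).image Prod.fst = X := by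
  simp [matchByRank, image_image, Function.comp_def]

theorem Finset.image_snd_matchByRank (X : Finset α) (Y : Finset β) {k : ℕ} (hX : #X = k)
    (hY : #Y = k) : (X.matchByRank Y hX hY).image Prod.snd = Y := by
  simp [matchByRank, image_image, Function.comp_def]

variable {S : Finset (α × β)}

theorem IsChain.card_image_fst (hS : IsChain Prod.StrongLT (S : Set (α × β))) :
    #(S.image Prod.fst) = #S :=
  card_image_of_injOn fun p hp q hq hpq => by
    by_contra hne
    rcases hS hp hq hne with h | h <;> exact h.1.ne (by rw [hpq])

theorem IsChain.card_image_snd (hS : IsChain Prod.StrongLT (S : Set (α × β))) :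
    #(S.image Prod.snd) = #S :=
  card_image_of_injOn fun p hp q hq hpq => by
    by_contra hne
    rcases hS hp hq hne with h | h <;> exact h.2.ne (by rw [hpq])

theorem IsChain.strongLT_of_toLex_lt (hS : IsChain Prod.StrongLT (S : Set (α × β)))
    {p q : α × β} (hp : p ∈ S) (hq : q ∈ S) (h : toLex p < toLex q) : Prod.StrongLT p q := by
  refine (hS hp hq (by rintro rfl; exact h.false)).resolve_right fun hqp => h.not_gt ?_
  exact Prod.Lex.lt_iff.2 (.inl hqp.1)

/-- Listing a chain in lexicographic order lists both coordinates increasingly, so the chain is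
recovered from its two projections by matching ranks. -/
theorem IsChain.matchByRank_image_fst_snd (hS : IsChain Prod.StrongLT (S : Set (α × β)))
    {k : ℕ} (hX : #(S.image Prod.fst) = k) (hY : #(S.image Prod.snd) = k) :
    (S.image Prod.fst).matchByRank (S.image Prod.snd) hX hY = S := by
  obtain rfl : k = #S := hX.symm.trans hS.card_image_fst
  let L := (S.map toLex.toEmbedding).orderEmbOfFin (card_map _)
  have hL_mem (t : Fin #S) : ofLex (L t) ∈ S := by
    simpa using (S.map toLex.toEmbedding).orderEmbOfFin_mem (card_map _) t
  have hL_mono {s t : Fin #S} (h : s < t) : Prod.StrongLT (ofLex (L s)) (ofLex (L t)) :=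
    hS.strongLT_of_toLex_lt (hL_mem s) (hL_mem t) (L.strictMono h)
  have hfst : (fun t => (ofLex (L t)).1) = (S.image Prod.fst).orderEmbOfFin hX :=
    orderEmbOfFin_unique _ (fun t => mem_image_of_mem _ (hL_mem t)) fun _ _ h => (hL_mono h).1
  have hsnd : (fun t => (ofLex (L t)).2) = (S.image Prod.snd).orderEmbOfFin hY :=
    orderEmbOfFin_unique _ (fun t => mem_image_of_mem _ (hL_mem t)) fun _ _ h => (hL_mono h).2
  calc _ = univ.image (fun t => ofLex (L t)) := by
        simp only [matchByRank, ← hfst, ← hsnd]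
    _ = (univ.image L).image ofLex := image_image.symm
    _ = S := by
        rw [image_orderEmbOfFin_univ, map_eq_image, image_image]
        exact image_id'

def strongChainEquiv :
    {S : Finset (α × β) // IsChain Prod.StrongLT (S : Set (α × β))} ≃
      {p : Finset α × Finset β // #p.1 = #p.2} where
  toFun S := ⟨(S.1.image Prod.fst, S.1.image Prod.snd),
    S.2.card_image_fst.trans S.2.card_image_snd.symm⟩
  invFun p := ⟨p.1.1.matchByRank p.1.2 rfl p.2.symm, isChain_matchByRank _ _ _ _⟩
  left_inv S := Subtype.ext (S.2.matchByRank_image_fst_snd _ _)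
  right_inv _ := Subtype.ext (Prod.ext (image_fst_matchByRank _ _ _ _)
    (image_snd_matchByRank _ _ _ _))

end StrongChain

theorem card_finset_pairs_with_card_eq (α : Type*) [Fintype α] :
    Nat.card {p : Finset α × Finset α // #p.1 = #p.2} =
      (2 * Fintype.card α).choose (Fintype.card α) := by
  classical
  rw [Nat.card_eq_fintype_card, Fintype.card_subtype, ← Nat.sum_range_choose_sq,
    card_eq_sum_card_fiberwise (f := fun p => #p.1) (t := range (Fintype.card α + 1))]
  · refine sum_congr rfl fun k _ => ?_
    have hfiber : ((univ.filter fun p : Finset α × Finset α => #p.1 = #p.2).filter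
        fun p => #p.1 = k) =
        powersetCard k univ ×ˢ powersetCard k univ := by
      ext p
      simp only [mem_filter, mem_univ, true_and, mem_product, mem_powersetCard, subset_univ]
      omega
    rw [hfiber, card_product, card_powersetCard, card_univ, sq]
  · intro p _
    simpa [Nat.lt_succ_iff] using card_le_univ p.1

namespace DRootA

variable {n : ℕ}

def toPair (a : DRootA n) : ℕ × ℕ := if a.1.2.2 then (a.1.1, a.1.2.1) else (a.1.2.1, a.1.1)

theorem exists_mem_inter_iff {i j i' j' : ℕ} (hi : 1 ≤ i) (hj : j ≤ n) (hij : i ≤ j)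
    (hij' : i' ≤ j') :
    (∃ m : ℕ, 1 ≤ m ∧ m ≤ n ∧ i ≤ m ∧ m ≤ j ∧ i' ≤ m ∧ m ≤ j') ↔ i ≤ j' ∧ i' ≤ j :=
  ⟨fun ⟨m, hm⟩ => by omega, fun _ => ⟨max i i', by omega⟩⟩

theorem incomparable_iff {a b : DRootA n} (hab : a ≠ b) :
    ¬ dleA n a b ∧ ¬ dleA n b a ↔
      Prod.StrongLT a.toPair b.toPair ∨ Prod.StrongLT b.toPair a.toPair := by
  replace hab : a.1 ≠ b.1 := fun h => hab (Subtype.ext h)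
  obtain ⟨⟨i, j, s⟩, hi, hij, hj, hs⟩ := a
  obtain ⟨⟨i', j', t⟩, hi', hij', hj', ht⟩ := b
  dsimp only at hi hij hj hs hi' hij' hj' ht
  simp only [ne_eq, Prod.mk.injEq] at hab
  cases s <;> cases t <;> simp [dleA, toPair, Prod.StrongLT, exists_mem_inter_iff, *] at * <;> omega

theorem toPair_mem_Icc (a : DRootA n) :
    a.toPair.1 ∈ Set.Icc 1 n ∧ a.toPair.2 ∈ Set.Icc 1 n := by
  obtain ⟨⟨i, j, s⟩, hi, hij, hj, -⟩ := a
  dsimp only at hi hij hj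
  cases s <;> simp [toPair] <;> omega

def equivIcc : DRootA n ≃ Set.Icc 1 n × Set.Icc 1 n where
  toFun a := (⟨a.toPair.1, a.toPair_mem_Icc.1⟩, ⟨a.toPair.2, a.toPair_mem_Icc.2⟩)
  invFun p :=
    if h : (p.1 : ℕ) ≤ p.2 then ⟨(p.1, p.2, true), p.1.2.1, h, p.2.2.2, fun _ => rfl⟩
    else ⟨(p.2, p.1, false), p.2.2.1, (not_le.1 h).le, p.1.2.2, fun h' => absurd h'.ge h⟩
  left_inv a := by
    obtain ⟨⟨i, j, s⟩, hi, hij, hj, hs⟩ := a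
    dsimp only at hi hij hj hs
    apply Subtype.ext
    cases s
    · have hji : ¬ j ≤ i := fun h => Bool.false_ne_true (hs (le_antisymm hij h))
      simp [toPair, hji]
    · simp [toPair, hij]
  right_inv p := by
    obtain ⟨⟨x, hx⟩, ⟨y, hy⟩⟩ := p
    by_cases h : x ≤ y <;> simp [toPair, h]

theorem isAntichain_iff_isChain_image_equivIcc (s : Set (DRootA n)) :
    IsAntichain (dleA n) s ↔ IsChain Prod.StrongLT (equivIcc '' s) := by
  rw [IsChain, equivIcc.injective.injOn.pairwise_image]
  exact ⟨fun h a ha b hb hab => (incomparable_iff hab).1 ⟨h ha hb hab, h hb ha hab.symm⟩,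
    fun h a ha b hb hab => ((incomparable_iff hab).2 (h ha hb hab)).1⟩

end DRootA

theorem doubledRootPosetA_antichain_count_general (n : ℕ) :
    Nat.card {A : Finset (DRootA n) // IsAntichain (dleA n) (A : Set (DRootA n))} =
      Nat.choose (2 * n) n := by
  let P := Set.Icc 1 n × Set.Icc 1 n
  have hchains : {A : Finset (DRootA n) // IsAntichain (dleA n) (A : Set (DRootA n))} ≃
      {S : Finset P // IsChain Prod.StrongLT (S : Set P)} :=
    (DRootA.equivIcc (n := n)).finsetCongr.subtypeEquiv fun A => by
      rw [DRootA.isAntichain_iff_isChain_image_equivIcc, Equiv.finsetCongr_apply, coe_map]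
      rfl
  rw [Nat.card_congr (hchains.trans strongChainEquiv), card_finset_pairs_with_card_eq]
  simp

/-- The number of antichains in the doubled root poset of type Aₙ is the central binomial
coefficient `C(2n, n)`. -/
theorem doubledRootPosetA_antichain_count (n : ℕ) (hn : 1 ≤ n) :
    Nat.card {A : Finset (DRootA n) // IsAntichain (dleA n) (A : Set (DRootA n))} =
      Nat.choose (2 * n) n :=
  doubledRootPosetA_antichain_count_general n
end

section
/- Let L be a finite lattice in which every element has a canonical join representation, and let Θ be a congruence on L. If j is a canonical joinand of an element a ∈ L and Θ does not contract j, then j is a canonical joinand of π↓(a). Moreover, if π↓(a) = a, then Θ contracts none of the canonical joinands of a. -/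
/-- `A` is the canonical join representation of `a`: `⋁A = a`, `A` is an antichain, and for
every finite subset `B` with `⋁B = a`, every element of `A` lies below some element of `B`. -/
def IsCJR {α : Type*} [Lattice α] [OrderBot α] (A : Finset α) (a : α) : Prop :=
  A.sup id = a ∧ IsAntichain (· ≤ ·) (A : Set α) ∧
    ∀ B : Finset α, B.sup id = a → ∀ x ∈ A, ∃ y ∈ B, x ≤ y

/-!
If `Θ` does not contract `j`, then `j` is the only element of its `Θ`-class below `j`: otherwise
some `b ⋖ j` lies above a congruent element and joining with `b` gives `j ≡ b`. Hence `π↓` fixes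
`j` and `j ≤ π↓ a`, and `π↓ a` is the join of `π↓` over the canonical joinands of `a`. Replacing
`j` by the canonical joinands of `π↓ a` in the canonical join representation of `a` still joins
to `a`, so `j` lies below one of them, which is then squeezed between `j` and `π↓ j = j`.
Conversely, if `j ≡ b ⋖ j` then replacing `j` by `b` gives an element congruent to `a` and below
`a`; when `a = π↓ a` it is `a` itself, contradicting the canonicity of `j`.
-/

section LatticeCongruence

variable {α : Type*}

structure IsLatticeCon [Lattice α] (Θ : α → α → Prop) : Prop where
  equivalence : Equivalence Θ
  sup : ∀ a₁ a₂ b₁ b₂, Θ a₁ a₂ → Θ b₁ b₂ → Θ (a₁ ⊔ b₁) (a₂ ⊔ b₂)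
  inf : ∀ a₁ a₂ b₁ b₂, Θ a₁ a₂ → Θ b₁ b₂ → Θ (a₁ ⊓ b₁) (a₂ ⊓ b₂)

/-- `π` is the map `π↓` sending each element to the least element of its `Θ`-class. -/
structure IsDownProjection [Preorder α] (Θ : α → α → Prop) (π : α → α) : Prop where
  rel : ∀ a, Θ (π a) a
  le : ∀ a b, Θ b a → π a ≤ b

def Contracts [Preorder α] (Θ : α → α → Prop) (j : α) : Prop :=
  ∃ b, b ⋖ j ∧ Θ j b

theorem Finset.sup_sup_erase [SemilatticeSup α] [OrderBot α] {β : Type*} [DecidableEq β]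
    {s : Finset β} {f : β → α} {j : β} (hj : j ∈ s) : f j ⊔ (s.erase j).sup f = s.sup f := by
  rw [← Finset.sup_insert, Finset.insert_erase hj]

section CJR

variable [Lattice α] [OrderBot α] {A : Finset α} {a j : α}

theorem IsCJR.le_of_mem (hA : IsCJR A a) (hj : j ∈ A) : j ≤ a :=
  hA.1 ▸ Finset.le_sup (f := id) hj

variable [DecidableEq α]

theorem IsCJR.sup_erase_le (hA : IsCJR A a) (j : α) : (A.erase j).sup id ≤ a :=
  hA.1 ▸ Finset.sup_mono (Finset.erase_subset j A)

theorem IsCJR.sup_sup_erase (hA : IsCJR A a) (hj : j ∈ A) : j ⊔ (A.erase j).sup id = a :=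
  hA.1 ▸ Finset.sup_sup_erase (f := id) hj

theorem IsCJR.exists_le_of_sup_erase_sup_eq (hA : IsCJR A a) (hj : j ∈ A) (C : Finset α)
    (hC : (A.erase j).sup id ⊔ C.sup id = a) : ∃ y ∈ C, j ≤ y := by
  obtain ⟨y, hy, hjy⟩ := hA.2.2 (A.erase j ∪ C) (by rw [Finset.sup_union, hC]) j hj
  rcases Finset.mem_union.mp hy with hyA | hyC
  · exact absurd hjy (hA.2.1 hj (Finset.mem_of_mem_erase hyA) (Finset.ne_of_mem_erase hyA).symm)
  · exact ⟨y, hyC, hjy⟩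

end CJR

namespace IsLatticeCon

variable [Lattice α] {Θ : α → α → Prop}

theorem eq_of_rel_of_le [IsStronglyCoatomic α] (hΘ : IsLatticeCon Θ) {j x : α}
    (hj : ¬Contracts Θ j) (hjx : Θ j x) (hxj : x ≤ j) : x = j := by
  by_contra hne
  obtain ⟨b, hxb, hbj⟩ := exists_le_covBy_of_lt (lt_of_le_of_ne hxj hne)
  refine hj ⟨b, hbj, ?_⟩
  have h := hΘ.sup j x b b hjx (hΘ.equivalence.refl b)
  rwa [sup_eq_left.mpr hbj.le, sup_eq_right.mpr hxb] at h

theorem finsetSup_rel [OrderBot α] (hΘ : IsLatticeCon Θ) {f g : α → α} (hfg : ∀ x, Θ (f x) (g x))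
    (s : Finset α) : Θ (s.sup f) (s.sup g) := by
  induction s using Finset.cons_induction with
  | empty => exact hΘ.equivalence.refl ⊥
  | cons x s _ ih => simpa only [Finset.sup_cons] using hΘ.sup _ _ _ _ (hfg x) ih

end IsLatticeCon

namespace IsDownProjection

variable [Lattice α] {Θ : α → α → Prop} {π : α → α}

theorem le_self (hΘ : IsLatticeCon Θ) (hπ : IsDownProjection Θ π) (a : α) : π a ≤ a :=
  hπ.le a a (hΘ.equivalence.refl a)

theorem monotone (hΘ : IsLatticeCon Θ) (hπ : IsDownProjection Θ π) : Monotone π := by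
  intro x y hxy
  have h := hΘ.inf (π y) y (π x) x (hπ.rel y) (hπ.rel x)
  rw [inf_eq_right.mpr hxy] at h
  exact (hπ.le x _ h).trans inf_le_left

theorem finsetSup (hΘ : IsLatticeCon Θ) (hπ : IsDownProjection Θ π) [OrderBot α]
    (s : Finset α) : s.sup π = π (s.sup id) :=
  le_antisymm (Finset.sup_le fun _ hx => hπ.monotone hΘ (Finset.le_sup (f := id) hx))
    (hπ.le _ _ (hΘ.finsetSup_rel hπ.rel s))

variable [IsStronglyCoatomic α]

theorem apply_eq_self_of_not_contracts (hΘ : IsLatticeCon Θ) (hπ : IsDownProjection Θ π)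
    {j : α} (hj : ¬Contracts Θ j) : π j = j :=
  hΘ.eq_of_rel_of_le hj (hΘ.equivalence.symm (hπ.rel j)) (hπ.le_self hΘ j)

theorem le_apply_of_not_contracts (hΘ : IsLatticeCon Θ) (hπ : IsDownProjection Θ π)
    {j a : α} (hj : ¬Contracts Θ j) (hja : j ≤ a) : j ≤ π a := by
  have h := hΘ.inf (π a) a j j (hπ.rel a) (hΘ.equivalence.refl j)
  rw [inf_eq_right.mpr hja] at h
  exact inf_eq_right.mp (hΘ.eq_of_rel_of_le hj (hΘ.equivalence.symm h) inf_le_right)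

end IsDownProjection

section Main

variable [Lattice α] [OrderBot α] {Θ : α → α → Prop} {π : α → α} {A : Finset α} {a j : α}

theorem IsCJR.mem_of_not_contracts [IsStronglyCoatomic α] (hΘ : IsLatticeCon Θ)
    (hπ : IsDownProjection Θ π) (hA : IsCJR A a) (hj : j ∈ A) (hnc : ¬Contracts Θ j)
    {B : Finset α} (hB : IsCJR B (π a)) : j ∈ B := by
  classical
  have hjπa : j ≤ π a := hπ.le_apply_of_not_contracts hΘ hnc (hA.le_of_mem hj)
  have hreplace : (A.erase j).sup id ⊔ B.sup id = a := by
    refine le_antisymm (sup_le (hA.sup_erase_le j) (hB.1 ▸ hπ.le_self hΘ a)) ?_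
    calc a = (A.erase j).sup id ⊔ j := by rw [sup_comm, hA.sup_sup_erase hj]
      _ ≤ (A.erase j).sup id ⊔ B.sup id := hB.1 ▸ sup_le_sup_left hjπa _
  obtain ⟨y, hyB, hjy⟩ := hA.exists_le_of_sup_erase_sup_eq hj B hreplace
  have hπA : (A.image π).sup id = π a := by
    rw [Finset.sup_image, ← hA.1]
    exact hπ.finsetSup hΘ A
  obtain ⟨_, hx, hyx⟩ := hB.2.2 _ hπA y hyB
  obtain ⟨x, hxA, rfl⟩ := Finset.mem_image.mp hx
  have hxj : x = j := by
    by_contra hne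
    exact hA.2.1 hj hxA (Ne.symm hne) (hjy.trans (hyx.trans (hπ.le_self hΘ x)))
  have hyj : y = j := le_antisymm (hπ.apply_eq_self_of_not_contracts hΘ hnc ▸ hxj ▸ hyx) hjy
  exact hyj ▸ hyB

theorem IsCJR.not_contracts_of_apply_eq_self (hΘ : IsLatticeCon Θ) (hπ : IsDownProjection Θ π)
    (hA : IsCJR A a) (hj : j ∈ A) (hπa : π a = a) : ¬Contracts Θ j := by
  classical
  rintro ⟨b, hbj, hjb⟩
  have hrel : Θ ((A.erase j).sup id ⊔ b) a := by
    have h := hΘ.sup _ _ _ _ (hΘ.equivalence.refl ((A.erase j).sup id)) (hΘ.equivalence.symm hjb)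
    rwa [sup_comm _ j, hA.sup_sup_erase hj] at h
  have hreplace : (A.erase j).sup id ⊔ ({b} : Finset α).sup id = a := by
    rw [Finset.sup_singleton, id_eq]
    exact le_antisymm (sup_le (hA.sup_erase_le j) (hbj.le.trans (hA.le_of_mem hj)))
      (hπa ▸ hπ.le a _ hrel)
  obtain ⟨y, hy, hjy⟩ := hA.exists_le_of_sup_erase_sup_eq hj {b} hreplace
  exact hbj.lt.not_ge (Finset.mem_singleton.mp hy ▸ hjy)

end Main

end LatticeCongruence

theorem canonical_joinand_congruence_general {α : Type*} [Lattice α] [OrderBot α] [Fintype α]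
    (Θ : α → α → Prop) (hΘeq : Equivalence Θ)
    (hΘsup : ∀ a₁ a₂ b₁ b₂, Θ a₁ a₂ → Θ b₁ b₂ → Θ (a₁ ⊔ b₁) (a₂ ⊔ b₂))
    (hΘinf : ∀ a₁ a₂ b₁ b₂, Θ a₁ a₂ → Θ b₁ b₂ → Θ (a₁ ⊓ b₁) (a₂ ⊓ b₂))
    (π : α → α) (hπΘ : ∀ a, Θ (π a) a) (hπle : ∀ a b, Θ b a → π a ≤ b)
    (a : α) (A : Finset α) (hA : IsCJR A a) (j : α) (hj : j ∈ A) :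
    ((¬ ∃ b, b ⋖ j ∧ Θ j b) → ∀ B : Finset α, IsCJR B (π a) → j ∈ B) ∧
      (π a = a → ¬ ∃ b, b ⋖ j ∧ Θ j b) := by
  have hΘ : IsLatticeCon Θ := ⟨hΘeq, hΘsup, hΘinf⟩
  have hπ : IsDownProjection Θ π := ⟨hπΘ, hπle⟩
  exact ⟨fun hnc _ hB => hA.mem_of_not_contracts hΘ hπ hj hnc hB,
    hA.not_contracts_of_apply_eq_self hΘ hπ hj⟩

/-- Let `L` be a finite lattice in which every element has a canonical join representation,
and let `Θ` be a lattice congruence on `L`, with `π` sending each element to the least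
element of its `Θ`-class.  `Θ` contracts a join-irreducible `j` if `j` is congruent to the
(unique) element it covers.  If `j` is a canonical joinand of `a` and `Θ` does not contract
`j`, then `j` is a canonical joinand of `π a`; moreover if `π a = a` then `Θ` contracts none
of the canonical joinands of `a`. -/
theorem canonical_joinand_congruence {α : Type*} [Lattice α] [OrderBot α] [Fintype α]
    (Θ : α → α → Prop) (hΘeq : Equivalence Θ)
    (hΘsup : ∀ a₁ a₂ b₁ b₂, Θ a₁ a₂ → Θ b₁ b₂ → Θ (a₁ ⊔ b₁) (a₂ ⊔ b₂))
    (hΘinf : ∀ a₁ a₂ b₁ b₂, Θ a₁ a₂ → Θ b₁ b₂ → Θ (a₁ ⊓ b₁) (a₂ ⊓ b₂))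
    (hCJR : ∀ a : α, ∃ A : Finset α, IsCJR A a)
    (π : α → α) (hπΘ : ∀ a, Θ (π a) a) (hπle : ∀ a b, Θ b a → π a ≤ b)
    (a : α) (A : Finset α) (hA : IsCJR A a) (j : α) (hj : j ∈ A) :
    ((¬ ∃ b, b ⋖ j ∧ Θ j b) → ∀ B : Finset α, IsCJR B (π a) → j ∈ B) ∧
      (π a = a → ¬ ∃ b, b ⋖ j ∧ Θ j b) :=
  canonical_joinand_congruence_general Θ hΘeq hΘsup hΘinf π hπΘ hπle a A hA j hj
end

section
/- For every integer n ≥ 1, the polynomial identity Cat(A_n; q) = (1+q)·Cat(A_{n−1}; q) + q·Σ_{i=1}^{n−1} Cat(A_{i−1}; q)·Cat(A_{n−i−1}; q) holds in ℚ[q]. -/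
open Polynomial

/-- The type-A Catalan polynomial `Cat(Aₙ; q) = Σₖ Narₖ(Aₙ) qᵏ`, where
`Narₖ(Aₙ) = (1/(n+1))·C(n+1, k)·C(n+1, k+1)` are the type-A Narayana numbers. -/
noncomputable def catA (n : ℕ) : Polynomial ℚ :=
  ∑ k ∈ Finset.range (n + 1),
    C ((1 / ((n : ℚ) + 1)) * ((n + 1).choose k : ℚ) * ((n + 1).choose (k + 1) : ℚ)) * X ^ k

/-!
Coker's identity `Cat(Aₙ; q) = Σⱼ C(n, 2j)·Catⱼ·qʲ·(1 + q)ⁿ⁻²ʲ` identifies the Narayana polynomial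
with the polynomial `Mₙ(y, z) = Σⱼ C(n, 2j)·Catⱼ·yʲ·zⁿ⁻²ʲ` counting Motzkin paths of length `n` by
up steps (`y`, the variable of `motzkinPoly z n`) and flat steps (`z`), at `y = q`, `z = 1 + q`.
Splitting a Motzkin path at its first step gives `Mₙ₊₁ = z·Mₙ + y·Σᵢ Mᵢ·Mₙ₋₁₋ᵢ`, which is the
recursion; algebraically this is Pascal's rule on `C(n + 1, 2j)`, the Catalan convolution and
`Σᵢ C(i, a)·C(m - 1 - i, b) = C(m, a + b + 1)`.

Coker's identity holds coefficientwise: after writing `Catⱼ = C(2j, j) - C(2j, j + 1)` and revising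
trinomial coefficients, the two halves sum by Vandermonde to `C(n, k)²` and
`C(n, k - 1)·C(n, k + 1)`, whose difference is the Narayana number.
-/

open Finset

namespace Nat

theorem choose_mul_choose_sub_eq (n a b : ℕ) :
    n.choose a * (n - a).choose b = n.choose (a + b) * (a + b).choose a := by
  rw [choose_mul (le_add_right a b), Nat.add_sub_cancel_left]

theorem choose_mul_choose_mul_choose_sub_comm (n a b c : ℕ) :
    n.choose (a + b) * (a + b).choose a * (n - (a + b)).choose c =
      n.choose (b + c) * (b + c).choose b * (n - (b + c)).choose a := by
  have hL : (a + b + c).choose (a + b) * (a + b).choose a =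
      (a + b + c).choose a * (b + c).choose b := by
    rw [choose_mul (le_add_right a b)]
    congr 2 <;> omega
  have hR : (b + c + a).choose (b + c) = (a + b + c).choose a := by
    rw [choose_symm_add, add_comm (b + c), ← add_assoc]
  calc _ = n.choose (a + b) * (n - (a + b)).choose c * (a + b).choose a := by ring
    _ = n.choose (a + b + c) * ((a + b + c).choose (a + b) * (a + b).choose a) := by
      rw [choose_mul_choose_sub_eq]; ring
    _ = n.choose (b + c) * (n - (b + c)).choose a * (b + c).choose b := by
      rw [hL, choose_mul_choose_sub_eq, hR, show b + c + a = a + b + c by ring]; ring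
    _ = _ := by ring

theorem sum_range_choose_mul_choose_add (s m r : ℕ) :
    ∑ t ∈ range (s + 1), s.choose t * m.choose (t + r) = (s + m).choose (s + r) := by
  rw [add_choose_eq, Nat.sum_antidiagonal_eq_sum_range_succ_mk,
    eventually_constant_sum (u := fun i => s.choose i * m.choose (s + r - i)) (N := s + 1)
      (fun i hi => by simp [choose_eq_zero_of_lt hi]) (by omega),
    ← sum_range_reflect]
  refine sum_congr rfl fun t ht => ?_
  have hts : t ≤ s := by simpa [Nat.lt_succ_iff] using ht
  rw [show s + 1 - 1 - t = s - t by omega, choose_symm hts]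
  congr 2
  omega

theorem choose_mul_sum_range_choose_mul_choose_add (n k r : ℕ) :
    n.choose k * ∑ t ∈ range (k + 1), k.choose t * (n - k).choose (t + r) =
      n.choose k * n.choose (k + r) := by
  rcases le_or_gt k n with hkn | hnk
  · rw [sum_range_choose_mul_choose_add, Nat.add_sub_cancel' hkn]
  · simp [choose_eq_zero_of_lt hnk]

theorem sum_range_choose_mul_choose_sub (m a b : ℕ) :
    ∑ i ∈ range m, i.choose a * (m - 1 - i).choose b = m.choose (a + b + 1) := by
  induction m generalizing a with
  | zero => simp
  | succ m ih =>
    have ih' (c : ℕ) :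
        ∑ i ∈ range m, i.choose c * (m - (i + 1)).choose b = m.choose (c + b + 1) := by
      rw [← ih c]
      exact sum_congr rfl fun i _ => by rw [Nat.sub_sub, add_comm 1 i]
    rw [sum_range_succ']
    simp only [Nat.add_sub_cancel, Nat.sub_zero]
    cases a with
    | zero =>
      have h := ih' 0
      simp only [choose_zero_right, one_mul, zero_add] at h ⊢
      rw [h, choose_succ_succ', add_comm]
    | succ a =>
      simp only [choose_succ_succ', add_mul, sum_add_distrib, choose_zero_succ, zero_mul, add_zero]
      rw [ih' a, ih' (a + 1), add_right_comm a 1 b]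

theorem catalan_add_choose_succ_eq_centralBinom (n : ℕ) :
    catalan n + (2 * n).choose (n + 1) = n.centralBinom := by
  have h1 := succ_mul_catalan_eq_centralBinom n
  have h2 := choose_succ_right_eq (2 * n) n
  rw [show 2 * n - n = n by omega, ← centralBinom_eq_two_mul_choose] at h2
  apply Nat.eq_of_mul_eq_mul_left (by omega : 0 < n + 1)
  linear_combination h1 + h2

theorem sum_range_choose_two_mul_mul_centralBinom (n k : ℕ) :
    ∑ j ∈ range (k + 1), n.choose (2 * j) * j.centralBinom * (n - 2 * j).choose (k - j) =
      n.choose k ^ 2 := by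
  have term : ∀ j ∈ range (k + 1), n.choose (2 * j) * j.centralBinom * (n - 2 * j).choose (k - j)
      = n.choose k * (k.choose j * (n - k).choose (j + 0)) := by
    intro j hj
    have hjk : j + (k - j) = k := by rw [mem_range] at hj; omega
    rw [centralBinom_eq_two_mul_choose, two_mul, choose_mul_choose_mul_choose_sub_comm, hjk,
      add_zero, mul_assoc]
  rw [sum_congr rfl term, ← mul_sum, choose_mul_sum_range_choose_mul_choose_add, sq, add_zero]

theorem sum_range_choose_two_mul_mul_choose_succ (n s : ℕ) :
    ∑ j ∈ range (s + 2),
        n.choose (2 * j) * (2 * j).choose (j + 1) * (n - 2 * j).choose (s + 1 - j) =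
      n.choose s * n.choose (s + 2) := by
  have term : ∀ t ∈ range (s + 1),
      n.choose (2 * (t + 1)) * (2 * (t + 1)).choose (t + 1 + 1) *
          (n - 2 * (t + 1)).choose (s + 1 - (t + 1))
        = n.choose s * (s.choose t * (n - s).choose (t + 2)) := by
    intro t ht
    have hts : t + (s - t) = s := by rw [mem_range] at ht; omega
    rw [show 2 * (t + 1) = t + 2 + t by ring, show s + 1 - (t + 1) = s - t by omega,
      choose_mul_choose_mul_choose_sub_comm, hts]
    ring
  rw [sum_range_succ', sum_congr rfl term, ← mul_sum, choose_mul_sum_range_choose_mul_choose_add]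
  simp

theorem sum_range_choose_two_mul_mul_catalan_add (n s : ℕ) :
    ∑ j ∈ range (s + 2), n.choose (2 * j) * catalan j * (n - 2 * j).choose (s + 1 - j) +
        n.choose s * n.choose (s + 2) = n.choose (s + 1) ^ 2 := by
  rw [← sum_range_choose_two_mul_mul_centralBinom n (s + 1),
    ← sum_range_choose_two_mul_mul_choose_succ, ← sum_add_distrib]
  refine sum_congr rfl fun j _ => ?_
  rw [← catalan_add_choose_succ_eq_centralBinom]
  ring

theorem choose_succ_mul_choose_succ_add (n s : ℕ) :
    (n + 1).choose (s + 1) * (n + 1).choose (s + 2) + (n + 1) * (n.choose s * n.choose (s + 2)) =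
      (n + 1) * n.choose (s + 1) ^ 2 := by
  rcases lt_or_ge n (s + 1) with hn | hn
  · simp [choose_eq_zero_of_lt hn, choose_eq_zero_of_lt (show n + 1 < s + 2 by omega),
      choose_eq_zero_of_lt (show n < s + 2 by omega)]
  obtain ⟨M, rfl⟩ : ∃ M, n = s + 1 + M := ⟨n - (s + 1), by omega⟩
  have e1 := choose_succ_right_eq (s + 1 + M) s
  have e2 := choose_succ_right_eq (s + 1 + M) (s + 1)
  rw [show s + 1 + M - s = M + 1 by omega] at e1
  rw [show s + 1 + M - (s + 1) = M by omega] at e2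
  rw [choose_succ_succ', show s + 2 = s + 1 + 1 by rfl, choose_succ_succ' _ (s + 1)]
  apply Nat.eq_of_mul_eq_mul_left (by omega : 0 < s + 2)
  zify at e1 e2 ⊢
  linear_combination (-(s + M + 2 : ℤ) * (s + 1 + M).choose (s + 1)) * e1 +
    ((s + 1 + M).choose (s + 1) + (s + M + 3) * (s + 1 + M).choose s) * e2

end Nat

section Motzkin

variable {R : Type*} [CommSemiring R]

noncomputable def motzkinPoly (z : R) (n : ℕ) : R[X] :=
  ∑ j ∈ range (n + 1), C (n.choose (2 * j) * catalan j * z ^ (n - 2 * j)) * X ^ j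

theorem coeff_motzkinPoly (z : R) (n j : ℕ) :
    (motzkinPoly z n).coeff j = n.choose (2 * j) * catalan j * z ^ (n - 2 * j) := by
  simp only [motzkinPoly, finsetSum_coeff, coeff_C_mul_X_pow, sum_ite_eq, mem_range]
  split_ifs with hj
  · rfl
  · simp [Nat.choose_eq_zero_of_lt (show n < 2 * j by omega)]

theorem mul_choose_mul_pow_sub (z : R) (n k : ℕ) :
    z * (n.choose k * z ^ (n - k)) = n.choose k * z ^ (n + 1 - k) := by
  by_cases hk : k ≤ n
  · rw [show n + 1 - k = n - k + 1 by omega, pow_succ]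
    ring
  · simp [Nat.choose_eq_zero_of_lt (not_le.mp hk)]

theorem choose_mul_pow_sub_mul_choose_mul_pow_sub (z : R) (i i' p q : ℕ) :
    (i.choose p * z ^ (i - p)) * (i'.choose q * z ^ (i' - q)) =
      i.choose p * i'.choose q * z ^ (i + i' - (p + q)) := by
  by_cases hp : p ≤ i
  · by_cases hq : q ≤ i'
    · rw [show i + i' - (p + q) = (i - p) + (i' - q) by omega, pow_add]
      ring
    · simp [Nat.choose_eq_zero_of_lt (not_le.mp hq)]
  · simp [Nat.choose_eq_zero_of_lt (not_le.mp hp)]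

theorem coeff_sum_range_motzkinPoly_mul (z : R) (m t : ℕ) :
    (∑ i ∈ range m, motzkinPoly z i * motzkinPoly z (m - 1 - i)).coeff t =
      m.choose (2 * t + 1) * catalan (t + 1) * z ^ (m - 1 - 2 * t) := by
  have pair : ∀ i ∈ range m, ∀ ab ∈ antidiagonal t,
      (motzkinPoly z i).coeff ab.1 * (motzkinPoly z (m - 1 - i)).coeff ab.2 =
        (i.choose (2 * ab.1) * (m - 1 - i).choose (2 * ab.2) : ℕ) *
          (catalan ab.1 * catalan ab.2 * z ^ (m - 1 - 2 * t) : R) := by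
    intro i hi ab hab
    rw [mem_range] at hi
    rw [HasAntidiagonal.mem_antidiagonal] at hab
    rw [coeff_motzkinPoly, coeff_motzkinPoly]
    calc _ = (i.choose (2 * ab.1) * z ^ (i - 2 * ab.1)) *
          ((m - 1 - i).choose (2 * ab.2) * z ^ (m - 1 - i - 2 * ab.2)) *
            (catalan ab.1 * catalan ab.2 : R) := by ring
      _ = _ := by
        rw [choose_mul_pow_sub_mul_choose_mul_pow_sub,
          show i + (m - 1 - i) - (2 * ab.1 + 2 * ab.2) = m - 1 - 2 * t by omega]
        push_cast
        ring
  simp only [finsetSum_coeff, coeff_mul]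
  rw [sum_congr rfl fun i hi => sum_congr rfl (pair i hi), sum_comm]
  simp only [← sum_mul, ← Nat.cast_sum, Nat.sum_range_choose_mul_choose_sub]
  have hmid : ∀ ab ∈ antidiagonal t, 2 * ab.1 + 2 * ab.2 + 1 = 2 * t + 1 := by
    intro ab hab; rw [HasAntidiagonal.mem_antidiagonal] at hab; omega
  rw [sum_congr rfl fun ab hab => by rw [hmid ab hab], ← mul_sum, ← sum_mul, catalan_succ']
  push_cast
  ring

theorem motzkinPoly_succ (z : R) (m : ℕ) :
    motzkinPoly z (m + 1) =
      C z * motzkinPoly z m + X * ∑ i ∈ range m, motzkinPoly z i * motzkinPoly z (m - 1 - i) := by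
  ext (_ | t)
  · simp [coeff_motzkinPoly, pow_succ, mul_comm]
  · rw [coeff_add, coeff_C_mul, coeff_X_mul, coeff_motzkinPoly, coeff_motzkinPoly,
      coeff_sum_range_motzkinPoly_mul]
    have hz : z * (m.choose (2 * (t + 1)) * catalan (t + 1) * z ^ (m - 2 * (t + 1)) : R) =
        m.choose (2 * (t + 1)) * catalan (t + 1) * z ^ (m - 1 - 2 * t) := by
      rw [show m - 1 - 2 * t = m + 1 - 2 * (t + 1) by omega,
        mul_right_comm _ _ (z ^ (m + 1 - 2 * (t + 1))), ← mul_choose_mul_pow_sub]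
      ring
    rw [hz, show 2 * (t + 1) = 2 * t + 1 + 1 by ring, Nat.choose_succ_succ',
      show m + 1 - (2 * t + 1 + 1) = m - 1 - 2 * t by omega]
    push_cast
    ring

end Motzkin

theorem coeff_catA (n k : ℕ) :
    (catA n).coeff k = 1 / ((n : ℚ) + 1) * (n + 1).choose k * (n + 1).choose (k + 1) := by
  simp only [catA, finsetSum_coeff, coeff_C_mul_X_pow, sum_ite_eq, mem_range]
  split_ifs with hk
  · rfl
  · simp [Nat.choose_eq_zero_of_lt (show n + 1 < k + 1 by omega)]

theorem coeff_catA_eq_sum_choose_mul_catalan (n k : ℕ) :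
    (catA n).coeff k =
      ∑ j ∈ range (k + 1), n.choose (2 * j) * catalan j * (n - 2 * j).choose (k - j) := by
  rw [coeff_catA]
  cases k with
  | zero => field_simp; simp
  | succ s =>
    have h1 := Nat.sum_range_choose_two_mul_mul_catalan_add n s
    have h2 := Nat.choose_succ_mul_choose_succ_add n s
    qify at h1 h2
    push_cast
    field_simp
    linear_combination h2 - (n + 1 : ℚ) * h1

theorem catA_eq_eval_motzkinPoly (n : ℕ) : catA n = (motzkinPoly (1 + X) n).eval X := by
  ext k
  simp only [coeff_catA_eq_sum_choose_mul_catalan, motzkinPoly, eval_finsetSum, eval_mul, eval_C,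
    eval_pow, eval_X, finsetSum_coeff, coeff_mul_X_pow', ← C_eq_natCast, ← C_mul, coeff_C_mul,
    coeff_one_add_X_pow, Nat.cast_sum, Nat.cast_mul, ← sum_filter]
  refine (sum_subset (fun j => by simp only [mem_filter, mem_range]; omega) fun j hj hj' => ?_).symm
  simp only [mem_filter, mem_range] at hj hj'
  simp [Nat.choose_eq_zero_of_lt (show n < 2 * j by omega)]

/-- The recursion `Cat(Aₙ; q) = (1+q)·Cat(Aₙ₋₁; q) + q·Σᵢ₌₁ⁿ⁻¹ Cat(Aᵢ₋₁; q)·Cat(Aₙ₋ᵢ₋₁; q)`. -/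
theorem catA_recursion (n : ℕ) (hn : 1 ≤ n) :
    catA n = (1 + X) * catA (n - 1) +
      X * ∑ i ∈ Finset.Icc 1 (n - 1), catA (i - 1) * catA (n - i - 1) := by
  obtain ⟨m, rfl⟩ : ∃ m, n = m + 1 := ⟨n - 1, by omega⟩
  have hsum : ∑ i ∈ Icc 1 m, catA (i - 1) * catA (m + 1 - i - 1) =
      ∑ i ∈ range m, catA i * catA (m - 1 - i) := by
    rw [← Ico_add_one_right_eq_Icc, sum_Ico_eq_sum_range, Nat.add_sub_cancel]
    exact sum_congr rfl fun i _ => by congr 2 <;> omega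
  rw [Nat.add_sub_cancel, hsum]
  simp only [catA_eq_eval_motzkinPoly, motzkinPoly_succ, eval_add, eval_mul, eval_C, eval_X,
    eval_finsetSum]
end

section
/- For every integer n ≥ 1 and every 0 ≤ k ≤ n, the number of k-element antichains in the root poset of type A_n that contain no simple root equals the number of (n−k)-element antichains in the root poset of type A_n that have full support. -/
/-!
An `l`-element antichain of intervals `[aᵢ, bᵢ]` is the same as two strictly increasing sequences
`a₁ < ⋯ < aₗ` and `b₁ < ⋯ < bₗ` with `aᵢ ≤ bᵢ`, i.e. a pair of `l`-subsets of `{1, …, n}` in the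
Gale order. Avoiding simple roots means `aᵢ < bᵢ`; lowering every `bᵢ` by one turns these
antichains into Gale pairs of `k`-subsets of `{1, …, n - 1}`. Full support means `a₁ = 1`,
`bₘ = n` and `aᵢ₊₁ ≤ bᵢ + 1`; dropping `a₁` and `bₘ` and lowering the other `aᵢ` by one turns these
antichains into Gale pairs of `(m - 1)`-subsets of `{1, …, n - 1}`. Finally `(S, T) ↦ (Tᶜ, Sᶜ)`
matches Gale pairs of `k`-subsets with Gale pairs of `(n - 1 - k)`-subsets, and
`m - 1 = n - 1 - k` for `m = n - k`.
-/

/-- A positive root of type Aₙ: an interval `[i, j]` with `1 ≤ i ≤ j ≤ n`. -/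
def ARoot (n : ℕ) : Type := {p : ℕ × ℕ // 1 ≤ p.1 ∧ p.1 ≤ p.2 ∧ p.2 ≤ n}

/-- The root poset order of type Aₙ: containment of intervals. -/
def aLe (n : ℕ) (x y : ARoot n) : Prop := y.1.1 ≤ x.1.1 ∧ x.1.2 ≤ y.1.2

/-- `x` is a simple root of type Aₙ: a singleton interval. -/
def aSimple (n : ℕ) (x : ARoot n) : Prop := x.1.1 = x.1.2

/-- A set `A` of type-Aₙ roots has full support: the union of its intervals is `{1, …, n}`. -/
def aFullSupport (n : ℕ) (A : Finset (ARoot n)) : Prop :=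
  ∀ m : ℕ, 1 ≤ m → m ≤ n → ∃ x ∈ A, x.1.1 ≤ m ∧ m ≤ x.1.2

open Finset

theorem Finset.image_map_eq_image_comp {α β γ : Type*} [DecidableEq γ] (f : β → γ) (e : α ↪ β)
    (s : Finset α) : (s.map e).image f = s.image (f ∘ e) := by
  classical
  rw [map_eq_image, image_image]

section GaleOrder

variable {α : Type*} [LinearOrder α]

theorem Monotone.le_iff_lt_card_filter_le {l : ℕ} {f : Fin l → α} (hf : Monotone f) (i : Fin l)
    (x : α) : f i ≤ x ↔ (i : ℕ) < #{j | f j ≤ x} := by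
  constructor
  · intro hix
    have hsub : Iic i ⊆ ({j | f j ≤ x} : Finset (Fin l)) := fun j hj => by
      simpa using (hf (mem_Iic.1 hj)).trans hix
    simpa using card_le_card hsub
  · intro hi
    by_contra! hxi
    have hsub : ({j | f j ≤ x} : Finset (Fin l)) ⊆ Iio i := fun j hj => by
      simp only [mem_filter, mem_univ, true_and] at hj
      exact mem_Iio.2 (hf.reflect_lt (hj.trans_lt hxi))
    simpa using hi.trans_le (card_le_card hsub)

theorem Monotone.forall_le_iff_card_filter_le {l : ℕ} {f g : Fin l → α} (hf : Monotone f)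
    (hg : Monotone g) : (∀ i, f i ≤ g i) ↔ ∀ x, #{j | g j ≤ x} ≤ #{j | f j ≤ x} := by
  constructor
  · refine fun hfg x => card_le_card fun j hj => ?_
    simp only [mem_filter, mem_univ, true_and] at hj ⊢
    exact (hfg j).trans hj
  · intro hcard i
    exact (hf.le_iff_lt_card_filter_le i _).2
      (((hg.le_iff_lt_card_filter_le i _).1 le_rfl).trans_le (hcard _))

theorem StrictMono.card_image_univ {l : ℕ} {f : Fin l → α} (hf : StrictMono f) :
    #(univ.image f) = l := by
  rw [card_image_of_injective _ hf.injective, card_univ, Fintype.card_fin]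

theorem StrictMono.orderEmbOfFin_image_univ {l : ℕ} {f : Fin l → α} (hf : StrictMono f)
    (h : #(univ.image f) = l) : ⇑((univ.image f).orderEmbOfFin h) = f :=
  (orderEmbOfFin_unique h (fun i => mem_image_of_mem f (mem_univ i)) hf).symm

theorem Finset.card_filter_le_eq_card_filter_orderEmbOfFin {s : Finset α} {l : ℕ} (h : #s = l)
    (x : α) : #{y ∈ s | y ≤ x} = #{j | s.orderEmbOfFin h j ≤ x} := by
  conv_lhs => rw [← map_orderEmbOfFin_univ s h]
  rw [filter_map, card_map]
  rfl

/-- The Gale order in counting form: for sets of equal size it compares the `i`-th smallest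
elements, see `Finset.galeLE_iff`. -/
def Finset.GaleLE (s t : Finset α) : Prop :=
  ∀ x, #{y ∈ t | y ≤ x} ≤ #{y ∈ s | y ≤ x}

theorem Finset.galeLE_iff {s t : Finset α} {l : ℕ} (hs : #s = l) (ht : #t = l) :
    GaleLE s t ↔ ∀ i, s.orderEmbOfFin hs i ≤ t.orderEmbOfFin ht i := by
  simp only [GaleLE, card_filter_le_eq_card_filter_orderEmbOfFin hs,
    card_filter_le_eq_card_filter_orderEmbOfFin ht]
  exact ((s.orderEmbOfFin hs).monotone.forall_le_iff_card_filter_le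
    (t.orderEmbOfFin ht).monotone).symm

theorem Finset.GaleLE.sdiff {s t u : Finset α} (h : GaleLE s t) (hs : s ⊆ u) (ht : t ⊆ u) :
    GaleLE (u \ t) (u \ s) := by
  intro x
  have hcard : ∀ v ⊆ u, #{y ∈ u \ v | y ≤ x} = #{y ∈ u | y ≤ x} - #{y ∈ v | y ≤ x} := by
    intro v hv
    rw [← card_sdiff_of_subset (filter_subset_filter _ hv)]
    congr 1
    ext y
    simp only [mem_filter, mem_sdiff]
    tauto
  rw [hcard s hs, hcard t ht]
  exact Nat.sub_le_sub_left (h x) _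

@[ext]
structure GalePair (u : Finset α) (l : ℕ) where
  lower : Finset α
  upper : Finset α
  lower_subset : lower ⊆ u
  upper_subset : upper ⊆ u
  card_lower : #lower = l
  card_upper : #upper = l
  galeLE : GaleLE lower upper

namespace GalePair

variable {u : Finset α} {l l' : ℕ}

theorem le_card (p : GalePair u l) : l ≤ #u :=
  p.card_lower ▸ card_le_card p.lower_subset

def compl (p : GalePair u l) (h : l + l' = #u) : GalePair u l' where
  lower := u \ p.upper
  upper := u \ p.lower
  lower_subset := sdiff_subset
  upper_subset := sdiff_subset
  card_lower := by rw [card_sdiff_of_subset p.upper_subset, p.card_upper]; omega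
  card_upper := by rw [card_sdiff_of_subset p.lower_subset, p.card_lower]; omega
  galeLE := p.galeLE.sdiff p.lower_subset p.upper_subset

def complEquiv (h : l + l' = #u) : GalePair u l ≃ GalePair u l' where
  toFun p := p.compl h
  invFun q := q.compl (by omega)
  left_inv p := GalePair.ext (Finset.sdiff_sdiff_eq_self p.lower_subset)
    (Finset.sdiff_sdiff_eq_self p.upper_subset)
  right_inv q := GalePair.ext (Finset.sdiff_sdiff_eq_self q.lower_subset)
    (Finset.sdiff_sdiff_eq_self q.upper_subset)

end GalePair

end GaleOrder

theorem StrictMono.finSnoc {α : Type*} [Preorder α] {n : ℕ} {f : Fin n → α} {a : α}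
    (hf : StrictMono f) (ha : ∀ i, f i < a) : StrictMono (Fin.snoc f a : Fin (n + 1) → α) := by
  intro i j hij
  induction j using Fin.lastCases with
  | last =>
    induction i using Fin.lastCases with
    | last => exact absurd hij (lt_irrefl _)
    | cast i => simpa using ha i
  | cast j =>
    induction i using Fin.lastCases with
    | last => exact absurd hij (Fin.castSucc_lt_last j).not_gt
    | cast i => simpa using hf (Fin.castSucc_lt_castSucc_iff.1 hij)

namespace ARoot

variable {n : ℕ} {s : Set (ARoot n)} {x y : ARoot n}

theorem left_lt_iff_right_lt_of_isAntichain (hs : IsAntichain (aLe n) s) (hx : x ∈ s)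
    (hy : y ∈ s) : x.1.1 < y.1.1 ↔ x.1.2 < y.1.2 := by
  rcases eq_or_ne x y with rfl | hxy
  · simp
  have hxy' : ¬ (y.1.1 ≤ x.1.1 ∧ x.1.2 ≤ y.1.2) := hs hx hy hxy
  have hyx' : ¬ (x.1.1 ≤ y.1.1 ∧ y.1.2 ≤ x.1.2) := hs hy hx hxy.symm
  omega

theorem eq_of_left_eq_of_isAntichain (hs : IsAntichain (aLe n) s) (hx : x ∈ s) (hy : y ∈ s)
    (h : x.1.1 = y.1.1) : x = y := by
  by_contra hxy
  have hxy' : ¬ (y.1.1 ≤ x.1.1 ∧ x.1.2 ≤ y.1.2) := hs hx hy hxy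
  have hyx' : ¬ (x.1.1 ≤ y.1.1 ∧ y.1.2 ≤ x.1.2) := hs hy hx (Ne.symm hxy)
  omega

end ARoot

/-- The sorted left and right endpoints of an `l`-element antichain of intervals in
`{1, …, n}`. -/
@[ext]
structure IntervalSeq (n l : ℕ) where
  left : Fin l → ℕ
  right : Fin l → ℕ
  strictMono_left : StrictMono left
  strictMono_right : StrictMono right
  one_le_left : ∀ i, 1 ≤ left i
  left_le_right : ∀ i, left i ≤ right i
  right_le : ∀ i, right i ≤ n

namespace IntervalSeq

variable {n l : ℕ}

def equivGalePair : IntervalSeq n l ≃ GalePair (Icc 1 n) l where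
  toFun x :=
    { lower := univ.image x.left
      upper := univ.image x.right
      lower_subset := by
        simpa [subset_iff] using fun i =>
          ⟨x.one_le_left i, (x.left_le_right i).trans (x.right_le i)⟩
      upper_subset := by
        simpa [subset_iff] using fun i =>
          ⟨(x.one_le_left i).trans (x.left_le_right i), x.right_le i⟩
      card_lower := x.strictMono_left.card_image_univ
      card_upper := x.strictMono_right.card_image_univ
      galeLE := by
        rw [galeLE_iff x.strictMono_left.card_image_univ x.strictMono_right.card_image_univ,
          x.strictMono_left.orderEmbOfFin_image_univ, x.strictMono_right.orderEmbOfFin_image_univ]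
        exact x.left_le_right }
  invFun p :=
    { left := p.lower.orderEmbOfFin p.card_lower
      right := p.upper.orderEmbOfFin p.card_upper
      strictMono_left := (orderEmbOfFin _ _).strictMono
      strictMono_right := (orderEmbOfFin _ _).strictMono
      one_le_left := fun i => (mem_Icc.1 (p.lower_subset (orderEmbOfFin_mem _ _ i))).1
      left_le_right := (galeLE_iff _ _).1 p.galeLE
      right_le := fun i => (mem_Icc.1 (p.upper_subset (orderEmbOfFin_mem _ _ i))).2 }
  left_inv x := IntervalSeq.ext (x.strictMono_left.orderEmbOfFin_image_univ _)
    (x.strictMono_right.orderEmbOfFin_image_univ _)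
  right_inv p := GalePair.ext (image_orderEmbOfFin_univ _ _) (image_orderEmbOfFin_univ _ _)

variable {m : ℕ} (x : IntervalSeq n l)

def toRoot (i : Fin l) : ARoot n :=
  ⟨(x.left i, x.right i), x.one_le_left i, x.left_le_right i, x.right_le i⟩

theorem toRoot_injective : Function.Injective x.toRoot := fun _ _ h =>
  x.strictMono_left.injective (congrArg (fun r : ARoot n => r.1.1) h)

def toFinset : Finset (ARoot n) :=
  univ.map ⟨x.toRoot, x.toRoot_injective⟩

theorem mem_toFinset {r : ARoot n} : r ∈ x.toFinset ↔ ∃ i, x.toRoot i = r := by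
  simp [toFinset]

theorem card_toFinset : #x.toFinset = l := by
  simp [toFinset]

theorem isAntichain_toFinset : IsAntichain (aLe n) (x.toFinset : Set (ARoot n)) := by
  intro a ha b hb hab hle
  obtain ⟨i, rfl⟩ := x.mem_toFinset.1 ha
  obtain ⟨j, rfl⟩ := x.mem_toFinset.1 hb
  have hij : i ≠ j := fun h => hab (h ▸ rfl)
  simp only [aLe, toRoot] at hle
  rcases hij.lt_or_gt with h | h
  · have := x.strictMono_left h; omega
  · have := x.strictMono_right h; omega

theorem toFinset_injective :
    Function.Injective (toFinset : IntervalSeq n l → Finset (ARoot n)) := by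
  intro x y h
  apply equivGalePair.injective
  have hleft := congrArg (image fun r => r.1.1) h
  have hright := congrArg (image fun r => r.1.2) h
  rw [toFinset, toFinset, image_map_eq_image_comp, image_map_eq_image_comp] at hleft hright
  exact GalePair.ext hleft hright

theorem exists_toFinset_eq {A : Finset (ARoot n)} (hA : IsAntichain (aLe n) (A : Set (ARoot n)))
    (hcard : #A = l) : ∃ x : IntervalSeq n l, x.toFinset = A := by
  have hlefts : #(A.image fun r => r.1.1) = l := by
    rw [card_image_of_injOn fun r hr r' hr' =>
      ARoot.eq_of_left_eq_of_isAntichain hA hr hr', hcard]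
  set f := (A.image fun r => r.1.1).orderEmbOfFin hlefts
  have hf : ∀ i, ∃ r ∈ A, r.1.1 = f i := fun i => mem_image.1 (orderEmbOfFin_mem _ hlefts i)
  choose e heA hef using hf
  let x : IntervalSeq n l :=
    { left := fun i => (e i).1.1
      right := fun i => (e i).1.2
      strictMono_left := fun i j hij => by simpa only [hef] using f.strictMono hij
      strictMono_right := fun i j hij =>
        (ARoot.left_lt_iff_right_lt_of_isAntichain hA (heA i) (heA j)).1
          (by simpa only [hef] using f.strictMono hij)
      one_le_left := fun i => (e i).2.1
      left_le_right := fun i => (e i).2.2.1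
      right_le := fun i => (e i).2.2.2 }
  refine ⟨x, eq_of_subset_of_card_le (fun r hr => ?_) (by rw [hcard, card_toFinset])⟩
  obtain ⟨i, rfl⟩ := x.mem_toFinset.1 hr
  exact heA i

noncomputable def equivAntichain (P : Finset (ARoot n) → Prop) :
    {x : IntervalSeq n l // P x.toFinset} ≃
      {A : Finset (ARoot n) // IsAntichain (aLe n) (A : Set (ARoot n)) ∧ #A = l ∧ P A} :=
  Equiv.ofBijective (fun x => ⟨x.1.toFinset, x.1.isAntichain_toFinset, x.1.card_toFinset, x.2⟩)
    ⟨fun _ _ h => Subtype.ext (toFinset_injective (congrArg Subtype.val h)),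
      fun ⟨_, hA, hcard, hP⟩ =>
        let ⟨x, hx⟩ := exists_toFinset_eq hA hcard
        ⟨⟨x, hx ▸ hP⟩, Subtype.ext hx⟩⟩

theorem forall_not_aSimple_toFinset_iff :
    (∀ r ∈ x.toFinset, ¬ aSimple n r) ↔ ∀ i, x.left i < x.right i := by
  simp only [toFinset, forall_mem_map, mem_univ, forall_const]
  simp [aSimple, toRoot, (x.left_le_right _).lt_iff_ne]

def equivLeftLtRight :
    {x : IntervalSeq (n + 1) l // ∀ i, x.left i < x.right i} ≃ IntervalSeq n l where
  toFun x :=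
    { left := x.1.left
      right := fun i => x.1.right i - 1
      strictMono_left := x.1.strictMono_left
      strictMono_right := fun _ _ hij =>
        Nat.sub_lt_sub_right (Nat.one_le_of_lt (x.2 _)) (x.1.strictMono_right hij)
      one_le_left := x.1.one_le_left
      left_le_right := fun i => Nat.le_sub_one_of_lt (x.2 i)
      right_le := fun i => Nat.sub_le_of_le_add (x.1.right_le i) }
  invFun y :=
    ⟨{ left := y.left
       right := fun i => y.right i + 1
       strictMono_left := y.strictMono_left
       strictMono_right := y.strictMono_right.add_const 1
       one_le_left := y.one_le_left
       left_le_right := fun i => (y.left_le_right i).trans (Nat.le_succ _)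
       right_le := fun i => Nat.succ_le_succ (y.right_le i) },
      fun i => Nat.lt_succ_of_le (y.left_le_right i)⟩
  left_inv x := Subtype.ext <| IntervalSeq.ext rfl <| funext fun i => Nat.sub_add_cancel
    ((Nat.zero_le _).trans_lt (x.2 i))
  right_inv _ := IntervalSeq.ext rfl <| funext fun _ => Nat.add_sub_cancel _ _

theorem aFullSupport_toFinset_iff :
    aFullSupport n x.toFinset ↔ ∀ p, 1 ≤ p → p ≤ n → ∃ i, x.left i ≤ p ∧ p ≤ x.right i := by
  refine forall₃_congr fun p _ _ => ⟨?_, ?_⟩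
  · rintro ⟨_, hr, hp⟩
    obtain ⟨i, rfl⟩ := x.mem_toFinset.1 hr
    exact ⟨i, hp⟩
  · rintro ⟨i, hp⟩
    exact ⟨x.toRoot i, x.mem_toFinset.2 ⟨i, rfl⟩, hp⟩

def IsCovering (x : IntervalSeq (n + 1) (m + 1)) : Prop :=
  x.left 0 = 1 ∧ x.right (Fin.last m) = n + 1 ∧
    ∀ i : Fin m, x.left i.succ ≤ x.right i.castSucc + 1

theorem aFullSupport_toFinset_iff_isCovering (x : IntervalSeq (n + 1) (m + 1)) :
    aFullSupport (n + 1) x.toFinset ↔ x.IsCovering := by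
  rw [aFullSupport_toFinset_iff]
  constructor
  · intro h
    refine ⟨?_, ?_, fun i => ?_⟩
    · obtain ⟨i, hi, -⟩ := h 1 le_rfl (by omega)
      have := x.strictMono_left.monotone (Fin.zero_le i)
      have := x.one_le_left 0
      omega
    · obtain ⟨i, -, hi⟩ := h (n + 1) (by omega) le_rfl
      have := x.strictMono_right.monotone (Fin.le_last i)
      have := x.right_le (Fin.last m)
      omega
    · by_contra! hgap
      have := x.left_le_right i.succ
      have := x.right_le i.succ
      obtain ⟨j, hj, hj'⟩ := h (x.right i.castSucc + 1) (by omega) (by omega)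
      rcases le_or_gt j i.castSucc with hji | hij
      · have := x.strictMono_right.monotone hji
        omega
      · have := x.strictMono_left.monotone (Fin.castSucc_lt_iff_succ_le.1 hij)
        omega
  · rintro ⟨hfirst, hlast, hgap⟩
    have hcover : ∀ i p, 1 ≤ p → p ≤ x.right i → ∃ j, x.left j ≤ p ∧ p ≤ x.right j := by
      intro i
      induction i using Fin.induction with
      | zero => exact fun p hp hp' => ⟨0, by omega, hp'⟩
      | succ i ih =>
        intro p hp hp'
        by_cases hpi : p ≤ x.right i.castSucc
        · exact ih p hp hpi
        · exact ⟨i.succ, by have := hgap i; omega, hp'⟩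
    exact fun p hp hp' => hcover (Fin.last m) p hp (by omega)

def dropEnds (x : IntervalSeq (n + 1) (m + 1)) (hx : x.IsCovering) : IntervalSeq n m where
  left i := x.left i.succ - 1
  right i := x.right i.castSucc
  strictMono_left _ _ hij :=
    Nat.sub_lt_sub_right (x.one_le_left _) (x.strictMono_left (Fin.succ_lt_succ_iff.2 hij))
  strictMono_right := x.strictMono_right.comp Fin.strictMono_castSucc
  one_le_left i := by
    have := x.strictMono_left (Fin.succ_pos i)
    have := hx.1
    omega
  left_le_right i := by
    have := hx.2.2 i
    omega
  right_le i := by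
    have := x.strictMono_right (Fin.castSucc_lt_last i)
    have := hx.2.1
    omega

def addEnds (y : IntervalSeq n m) : IntervalSeq (n + 1) (m + 1) :=
  have hmono : StrictMono (Fin.cons 1 fun i => y.left i + 1 : Fin (m + 1) → ℕ) :=
    Fin.strictMono_cons.2
      ⟨fun i => Nat.lt_succ_of_le (y.one_le_left i), y.strictMono_left.add_const 1⟩
  { left := Fin.cons 1 fun i => y.left i + 1
    right := Fin.snoc y.right (n + 1)
    strictMono_left := hmono
    strictMono_right := y.strictMono_right.finSnoc fun i => Nat.lt_succ_of_le (y.right_le i)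
    one_le_left := Fin.cases le_rfl fun i => by simp
    left_le_right := by
      refine Fin.lastCases ?_ fun i => ?_
      · rw [Fin.snoc_last]
        refine Fin.cases (by simp) (fun i => ?_) (Fin.last m)
        have := y.left_le_right i
        have := y.right_le i
        simp only [Fin.cons_succ]
        omega
      · have hlt := hmono (Fin.castSucc_lt_succ (i := i))
        have := y.left_le_right i
        simp only [Fin.cons_succ] at hlt
        rw [Fin.snoc_castSucc]
        omega
    right_le := Fin.lastCases (by simp) fun i => by simpa using (y.right_le i).trans n.le_succ }

theorem isCovering_addEnds (y : IntervalSeq n m) : y.addEnds.IsCovering :=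
  ⟨by simp [addEnds], by simp [addEnds], fun i => by
    simpa [addEnds] using y.left_le_right i⟩

def equivIsCovering : {x : IntervalSeq (n + 1) (m + 1) // x.IsCovering} ≃ IntervalSeq n m where
  toFun x := x.1.dropEnds x.2
  invFun y := ⟨y.addEnds, y.isCovering_addEnds⟩
  left_inv x := by
    obtain ⟨x, hfirst, hlast, -⟩ := x
    refine Subtype.ext (IntervalSeq.ext (funext <| Fin.cases ?_ fun i => ?_)
      (funext <| Fin.lastCases ?_ fun i => ?_))
    · simp [addEnds, hfirst]
    · have := x.one_le_left i.succ
      simp only [addEnds, dropEnds, Fin.cons_succ]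
      omega
    · simp [addEnds, hlast]
    · simp [addEnds, dropEnds]
  right_inv y := IntervalSeq.ext (funext fun i => by simp [addEnds, dropEnds])
    (funext fun i => by simp [addEnds, dropEnds])

end IntervalSeq

/-- The number of `k`-element antichains in the root poset of type Aₙ containing no simple
root equals the number of `(n-k)`-element antichains with full support. -/
theorem antichains_no_simple_eq_full_support (n k : ℕ) (hn : 1 ≤ n) (hk : k ≤ n) :
    Nat.card {A : Finset (ARoot n) // IsAntichain (aLe n) (A : Set (ARoot n)) ∧
        A.card = k ∧ ∀ x ∈ A, ¬ aSimple n x} =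
      Nat.card {A : Finset (ARoot n) // IsAntichain (aLe n) (A : Set (ARoot n)) ∧
        A.card = n - k ∧ aFullSupport n A} := by
  obtain ⟨n, rfl⟩ := Nat.exists_eq_add_of_le' hn
  rw [← Nat.card_congr (IntervalSeq.equivAntichain _),
    ← Nat.card_congr (IntervalSeq.equivAntichain _)]
  simp only [IntervalSeq.forall_not_aSimple_toFinset_iff]
  rcases hk.lt_or_eq with hk | rfl
  · obtain ⟨m, hm⟩ : ∃ m, n + 1 - k = m + 1 := ⟨n - k, by omega⟩
    rw [hm]
    simp only [IntervalSeq.aFullSupport_toFinset_iff_isCovering]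
    calc Nat.card {x : IntervalSeq (n + 1) k // ∀ i, x.left i < x.right i}
        = Nat.card (GalePair (Icc 1 n) k) :=
          Nat.card_congr (IntervalSeq.equivLeftLtRight.trans IntervalSeq.equivGalePair)
      _ = Nat.card (GalePair (Icc 1 n) m) :=
          Nat.card_congr (GalePair.complEquiv (by simp only [Nat.card_Icc]; omega))
      _ = Nat.card {x : IntervalSeq (n + 1) (m + 1) // x.IsCovering} :=
          (Nat.card_congr (IntervalSeq.equivIsCovering.trans IntervalSeq.equivGalePair)).symm
  · rw [Nat.card_congr (IntervalSeq.equivLeftLtRight.trans IntervalSeq.equivGalePair),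
      Nat.sub_self]
    have : IsEmpty (GalePair (Icc 1 n) (n + 1)) := ⟨fun p => by simpa using p.le_card⟩
    have : IsEmpty {x : IntervalSeq (n + 1) 0 // aFullSupport (n + 1) x.toFinset} := ⟨fun x => by
      obtain ⟨i, -⟩ := x.1.aFullSupport_toFinset_iff.1 x.2 1 le_rfl (by omega)
      exact i.elim0⟩
    simp only [Nat.card_of_isEmpty]
end

section
/- For every integer n ≥ 1, the polynomial identity (1+q)·Cat⁺⁺(A_n; q) + q·Cat⁺⁺(A_{n−1}; q) = q·Cat(A_{n−1}; q) holds. -/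
open Polynomial

/-- `Cat(Aₙ; q) = Σ_A q^|A|`, the sum over all antichains `A` in the root poset of
type Aₙ. -/
noncomputable def CatA (n : ℕ) : Polynomial ℚ :=
  ∑ᶠ A ∈ {A : Finset (ARoot n) | IsAntichain (aLe n) (A : Set (ARoot n))}, X ^ A.card

/-- `Cat⁺⁺(Aₙ; q) = Σ_A q^|A|`, the sum over antichains `A` in the root poset of type Aₙ
that contain no simple root and have full support. -/
noncomputable def CatppA (n : ℕ) : Polynomial ℚ :=
  ∑ᶠ A ∈ {A : Finset (ARoot n) | IsAntichain (aLe n) (A : Set (ARoot n)) ∧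
      (∀ x ∈ A, ¬ aSimple n x) ∧ aFullSupport n A}, X ^ A.card

/-!
Every antichain of intervals in `[1, n]` splits at its first cut `p` (the least `p ≥ 1` such
that no interval contains both `p` and `p + 1`) into a connected antichain on `[1, p]` and an
arbitrary antichain on `[p + 1, n]`. Writing `K_p` for the generating polynomial of connected
antichains on `[1, p]`, this gives `Cat(Aₙ) = ∑ₚ K_p Cat(Aₙ₋ₚ)` and
`Cat⁺⁺(Aₙ) = ∑_{p ≥ 2} K_p Cat⁺⁺(Aₙ₋ₚ)`: a connected antichain on `[1, p]` with `p ≥ 2` has full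
support and no simple root, while a first cut at `1` is incompatible with these two conditions.

An antichain is determined by its sets `I` of left and `J` of right endpoints. A connected
antichain `[i₁, j₁], …, [iₖ, jₖ]` on `[1, p + 2]` has `i₁ = 1` and `jₖ = p + 2`, and
rematching it to `[i₂, j₁], …, [iₖ, jₖ₋₁]` just deletes these two endpoints; this is a bijection
onto the antichains on `[2, p + 1]`. Hence `K₁ = 1 + q` and `K_{p+2} = q Cat(A_p)`, and the
identity follows from the two convolution recurrences by strong induction on `n`.
-/

open Finset
open scoped Classical

namespace TypeA

def IntervalLE (x y : ℕ × ℕ) : Prop := y.1 ≤ x.1 ∧ x.2 ≤ y.2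

def roots (a b : ℕ) : Finset (ℕ × ℕ) := (Icc a b ×ˢ Icc a b).filter fun x => x.1 ≤ x.2

theorem mem_roots {a b : ℕ} {x : ℕ × ℕ} : x ∈ roots a b ↔ a ≤ x.1 ∧ x.1 ≤ x.2 ∧ x.2 ≤ b := by
  simp only [roots, mem_filter, mem_product, mem_Icc]
  omega

-- Windows `[a, b]` other than `[1, n]` keep the parts of a split antichain in place;
-- `antichainsIn_add` translates them back.
noncomputable def antichainsIn (a b : ℕ) : Finset (Finset (ℕ × ℕ)) :=
  (roots a b).powerset.filter fun A => IsAntichain IntervalLE (A : Set (ℕ × ℕ))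

theorem mem_antichainsIn {a b : ℕ} {A : Finset (ℕ × ℕ)} :
    A ∈ antichainsIn a b ↔ A ⊆ roots a b ∧ IsAntichain IntervalLE (A : Set (ℕ × ℕ)) := by
  rw [antichainsIn, mem_filter, mem_powerset]

def NoSimple (A : Finset (ℕ × ℕ)) : Prop := ∀ x ∈ A, x.1 ≠ x.2

def Covers (a b : ℕ) (A : Finset (ℕ × ℕ)) : Prop :=
  ∀ m, a ≤ m → m ≤ b → ∃ x ∈ A, x.1 ≤ m ∧ m ≤ x.2

noncomputable def fullAntichainsIn (a b : ℕ) : Finset (Finset (ℕ × ℕ)) :=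
  (antichainsIn a b).filter fun A => NoSimple A ∧ Covers a b A

theorem fullAntichainsIn_subset {a b : ℕ} : fullAntichainsIn a b ⊆ antichainsIn a b :=
  filter_subset _ _

noncomputable def sizeGF (S : Finset (Finset (ℕ × ℕ))) : ℚ[X] := ∑ A ∈ S, X ^ #A

section Antichain

variable {A : Finset (ℕ × ℕ)} {x y : ℕ × ℕ}

theorem snd_lt_snd_of_fst_le (hA : IsAntichain IntervalLE (A : Set (ℕ × ℕ))) (hx : x ∈ A)
    (hy : y ∈ A) (hxy : x ≠ y) (h : x.1 ≤ y.1) : x.2 < y.2 :=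
  lt_of_not_ge fun h' => hA (mem_coe.2 hy) (mem_coe.2 hx) hxy.symm ⟨h, h'⟩

theorem fst_lt_fst_iff (hA : IsAntichain IntervalLE (A : Set (ℕ × ℕ))) (hx : x ∈ A)
    (hy : y ∈ A) : x.1 < y.1 ↔ x.2 < y.2 := by
  constructor
  · intro h
    exact snd_lt_snd_of_fst_le hA hx hy (by rintro rfl; omega) h.le
  · intro h
    by_contra h'
    have := snd_lt_snd_of_fst_le hA hy hx (by rintro rfl; omega) (not_lt.1 h')
    omega

theorem fst_eq_fst_iff (hA : IsAntichain IntervalLE (A : Set (ℕ × ℕ))) (hx : x ∈ A)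
    (hy : y ∈ A) : x.1 = y.1 ↔ x = y := by
  refine ⟨fun h => Prod.ext h ?_, fun h => h ▸ rfl⟩
  have h1 := fst_lt_fst_iff hA hx hy
  have h2 := fst_lt_fst_iff hA hy hx
  omega

theorem snd_eq_snd_iff (hA : IsAntichain IntervalLE (A : Set (ℕ × ℕ))) (hx : x ∈ A)
    (hy : y ∈ A) : x.2 = y.2 ↔ x = y := by
  refine ⟨fun h => (fst_eq_fst_iff hA hx hy).1 ?_, fun h => h ▸ rfl⟩
  have h1 := fst_lt_fst_iff hA hx hy
  have h2 := fst_lt_fst_iff hA hy hx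
  omega

end Antichain

section CountBelow

def countBelow (S : Finset ℕ) (r : ℕ) : ℕ := #(S.filter (· < r))

variable {S : Finset ℕ} {a b r : ℕ}

theorem countBelow_mono (h : a ≤ b) : countBelow S a ≤ countBelow S b :=
  card_le_card (monotone_filter_right S fun _ _ h' => lt_of_lt_of_le h' h)

theorem countBelow_lt_countBelow (ha : a ∈ S) (h : a < b) : countBelow S a < countBelow S b :=
  card_lt_card <| (ssubset_iff_of_subset
    (monotone_filter_right S fun _ _ h' => lt_trans h' h)).2
    ⟨a, mem_filter.2 ⟨ha, h⟩, by simp⟩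

theorem countBelow_injOn : Set.InjOn (countBelow S) S := by
  intro a ha b hb h
  by_contra hne
  rcases lt_or_gt_of_ne hne with hlt | hlt
  · exact (countBelow_lt_countBelow ha hlt).ne h
  · exact (countBelow_lt_countBelow hb hlt).ne' h

theorem countBelow_lt_card (ha : a ∈ S) : countBelow S a < #S :=
  card_lt_card (filter_ssubset.2 ⟨a, ha, lt_irrefl a⟩)

theorem image_countBelow : S.image (countBelow S) = range #S := by
  refine eq_of_subset_of_card_le (fun k hk => ?_) ?_
  · obtain ⟨a, ha, rfl⟩ := mem_image.1 hk
    exact mem_range.2 (countBelow_lt_card ha)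
  · rw [card_range, card_image_of_injOn countBelow_injOn]

theorem exists_countBelow_eq {k : ℕ} (hk : k < #S) : ∃ a ∈ S, countBelow S a = k :=
  mem_image.1 (image_countBelow ▸ mem_range.2 hk)

theorem countBelow_succ : countBelow S (r + 1) = countBelow S r + if r ∈ S then 1 else 0 := by
  simp only [countBelow, Nat.lt_succ_iff_lt_or_eq, filter_or, filter_eq' S r]
  split_ifs with h
  · rw [card_union_of_disjoint (disjoint_singleton_right.2 (by simp)), card_singleton]
  · rw [union_empty, add_zero]

theorem countBelow_insert (ha : a ∉ S) :
    countBelow (insert a S) r = countBelow S r + if a < r then 1 else 0 := by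
  rw [countBelow, filter_insert]
  split_ifs with h
  · rw [card_insert_of_notMem (fun h' => ha (mem_filter.1 h').1), countBelow]
  · rw [countBelow, add_zero]

theorem countBelow_eq_zero (hS : S ⊆ Icc a b) (hr : r ≤ a) : countBelow S r = 0 :=
  card_eq_zero.2 <| filter_eq_empty_iff.2 fun s hs => by
    have := mem_Icc.1 (hS hs)
    omega

theorem countBelow_eq_card (hS : S ⊆ Icc a b) (hr : b < r) : countBelow S r = #S := by
  rw [countBelow, filter_true_of_mem fun s hs => by have := mem_Icc.1 (hS hs); omega]

end CountBelow

section Endpoints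

-- For sorted `I = {i₁ < … < iₖ}` and `J = {j₁ < … < jₖ}` this says `iₘ ≤ jₘ` for all `m`.
def Dominates (I J : Finset ℕ) : Prop := ∀ r, countBelow J r ≤ countBelow I r

noncomputable def endpointPairs (a b : ℕ) : Finset (Finset ℕ × Finset ℕ) :=
  ((Icc a b).powerset ×ˢ (Icc a b).powerset).filter fun IJ => #IJ.1 = #IJ.2 ∧ Dominates IJ.1 IJ.2

theorem mem_endpointPairs {a b : ℕ} {I J : Finset ℕ} :
    (I, J) ∈ endpointPairs a b ↔ I ⊆ Icc a b ∧ J ⊆ Icc a b ∧ #I = #J ∧ Dominates I J := by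
  simp only [endpointPairs, mem_filter, mem_product, mem_powerset, and_assoc]

def endpoints (A : Finset (ℕ × ℕ)) : Finset ℕ × Finset ℕ := (A.image Prod.fst, A.image Prod.snd)

-- Pairs the `m`-th smallest element of `IJ.1` with the `m`-th smallest element of `IJ.2`.
noncomputable def ofEndpoints (IJ : Finset ℕ × Finset ℕ) : Finset (ℕ × ℕ) :=
  (IJ.1 ×ˢ IJ.2).filter fun x => countBelow IJ.1 x.1 = countBelow IJ.2 x.2

theorem mem_ofEndpoints {I J : Finset ℕ} {x : ℕ × ℕ} :
    x ∈ ofEndpoints (I, J) ↔ x.1 ∈ I ∧ x.2 ∈ J ∧ countBelow I x.1 = countBelow J x.2 := by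
  simp only [ofEndpoints, mem_filter, mem_product, and_assoc]

variable {a b : ℕ} {A : Finset (ℕ × ℕ)}

theorem card_image_fst (hA : IsAntichain IntervalLE (A : Set (ℕ × ℕ))) :
    #(A.image Prod.fst) = #A :=
  card_image_of_injOn fun _ hx _ hy => (fst_eq_fst_iff hA hx hy).1

theorem card_image_snd (hA : IsAntichain IntervalLE (A : Set (ℕ × ℕ))) :
    #(A.image Prod.snd) = #A :=
  card_image_of_injOn fun _ hx _ hy => (snd_eq_snd_iff hA hx hy).1

theorem countBelow_image_fst (hA : IsAntichain IntervalLE (A : Set (ℕ × ℕ))) (r : ℕ) :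
    countBelow (A.image Prod.fst) r = #(A.filter (·.1 < r)) := by
  rw [countBelow, filter_image]
  exact card_image_of_injOn fun _ hx _ hy =>
    (fst_eq_fst_iff hA (mem_filter.1 hx).1 (mem_filter.1 hy).1).1

theorem countBelow_image_snd (hA : IsAntichain IntervalLE (A : Set (ℕ × ℕ))) (r : ℕ) :
    countBelow (A.image Prod.snd) r = #(A.filter (·.2 < r)) := by
  rw [countBelow, filter_image]
  exact card_image_of_injOn fun _ hx _ hy =>
    (snd_eq_snd_iff hA (mem_filter.1 hx).1 (mem_filter.1 hy).1).1

theorem countBelow_fst_eq_countBelow_snd (hA : IsAntichain IntervalLE (A : Set (ℕ × ℕ)))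
    {x : ℕ × ℕ} (hx : x ∈ A) :
    countBelow (A.image Prod.fst) x.1 = countBelow (A.image Prod.snd) x.2 := by
  rw [countBelow_image_fst hA, countBelow_image_snd hA]
  exact congrArg card (filter_congr fun y hy => fst_lt_fst_iff hA hy hx)

theorem endpoints_mem (hA : A ∈ antichainsIn a b) : endpoints A ∈ endpointPairs a b := by
  obtain ⟨hAr, hAc⟩ := mem_antichainsIn.1 hA
  have hr := fun x (hx : x ∈ A) => mem_roots.1 (hAr hx)
  refine mem_endpointPairs.2 ⟨fun i hi => ?_, fun j hj => ?_, ?_, fun r => ?_⟩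
  · obtain ⟨x, hx, rfl⟩ := mem_image.1 hi
    have := hr x hx
    exact mem_Icc.2 (by omega)
  · obtain ⟨x, hx, rfl⟩ := mem_image.1 hj
    have := hr x hx
    exact mem_Icc.2 (by omega)
  · rw [card_image_fst hAc, card_image_snd hAc]
  · rw [countBelow_image_fst hAc, countBelow_image_snd hAc]
    exact card_le_card (monotone_filter_right A fun x hx h => by have := hr x hx; omega)

theorem ofEndpoints_endpoints (hA : IsAntichain IntervalLE (A : Set (ℕ × ℕ))) :
    ofEndpoints (endpoints A) = A := by
  ext x
  rw [endpoints, mem_ofEndpoints]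
  constructor
  · rintro ⟨hx1, hx2, hx⟩
    obtain ⟨y, hy, hyx⟩ := mem_image.1 hx1
    have hy2 : y.2 = x.2 := countBelow_injOn (mem_image_of_mem _ hy) hx2
      ((countBelow_fst_eq_countBelow_snd hA hy).symm.trans (hyx ▸ hx))
    rwa [← Prod.ext hyx hy2]
  · intro hx
    exact ⟨mem_image_of_mem _ hx, mem_image_of_mem _ hx, countBelow_fst_eq_countBelow_snd hA hx⟩

theorem ofEndpoints_mem {I J : Finset ℕ} (h : (I, J) ∈ endpointPairs a b) :
    ofEndpoints (I, J) ∈ antichainsIn a b := by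
  obtain ⟨hI, hJ, -, hdom⟩ := mem_endpointPairs.1 h
  refine mem_antichainsIn.2 ⟨fun x hx => ?_, fun x hx y hy hxy hle => ?_⟩
  · obtain ⟨hx1, hx2, hx⟩ := mem_ofEndpoints.1 hx
    have h1 := mem_Icc.1 (hI hx1)
    have h2 := mem_Icc.1 (hJ hx2)
    refine mem_roots.2 ⟨h1.1, not_lt.1 fun hlt => ?_, h2.2⟩
    have hdom' := hdom (x.2 + 1)
    rw [countBelow_succ, if_pos hx2] at hdom'
    have := countBelow_mono (S := I) (show x.2 + 1 ≤ x.1 by omega)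
    omega
  · obtain ⟨hx1, hx2, hx⟩ := mem_ofEndpoints.1 (mem_coe.1 hx)
    obtain ⟨hy1, hy2, hy⟩ := mem_ofEndpoints.1 (mem_coe.1 hy)
    have h1 := countBelow_mono (S := I) hle.1
    have h2 := countBelow_mono (S := J) hle.2
    exact hxy (Prod.ext (countBelow_injOn hx1 hy1 (by omega)) (countBelow_injOn hx2 hy2 (by omega)))

theorem endpoints_ofEndpoints {I J : Finset ℕ} (h : #I = #J) :
    endpoints (ofEndpoints (I, J)) = (I, J) := by
  refine Prod.ext (Subset.antisymm ?_ fun i hi => ?_) (Subset.antisymm ?_ fun j hj => ?_)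
  · exact fun i hi => by
      obtain ⟨x, hx, rfl⟩ := mem_image.1 hi
      exact (mem_ofEndpoints.1 hx).1
  · obtain ⟨j, hj, hij⟩ := exists_countBelow_eq (h ▸ countBelow_lt_card hi)
    exact mem_image.2 ⟨(i, j), mem_ofEndpoints.2 ⟨hi, hj, hij.symm⟩, rfl⟩
  · exact fun j hj => by
      obtain ⟨x, hx, rfl⟩ := mem_image.1 hj
      exact (mem_ofEndpoints.1 hx).2.1
  · obtain ⟨i, hi, hij⟩ := exists_countBelow_eq (h.symm ▸ countBelow_lt_card hj)
    exact mem_image.2 ⟨(i, j), mem_ofEndpoints.2 ⟨hi, hj, hij⟩, rfl⟩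

theorem sizeGF_filter_eq_sum_endpointPairs (C : Finset (ℕ × ℕ) → Prop)
    (C' : Finset ℕ × Finset ℕ → Prop) (hC : ∀ A ∈ antichainsIn a b, C A ↔ C' (endpoints A)) :
    sizeGF ((antichainsIn a b).filter C) = ∑ IJ ∈ (endpointPairs a b).filter C', X ^ #IJ.1 := by
  refine sum_nbij' endpoints ofEndpoints (fun A hA => ?_) (fun IJ hIJ => ?_) (fun A hA => ?_)
    (fun IJ hIJ => ?_) (fun A hA => ?_)
  · obtain ⟨hA, hCA⟩ := mem_filter.1 hA
    exact mem_filter.2 ⟨endpoints_mem hA, (hC A hA).1 hCA⟩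
  · obtain ⟨hIJ, hC'⟩ := mem_filter.1 hIJ
    have hmem := ofEndpoints_mem hIJ
    refine mem_filter.2 ⟨hmem, (hC _ hmem).2 ?_⟩
    rwa [endpoints_ofEndpoints (mem_endpointPairs.1 hIJ).2.2.1]
  · exact ofEndpoints_endpoints (mem_antichainsIn.1 (mem_filter.1 hA).1).2
  · exact endpoints_ofEndpoints (mem_endpointPairs.1 (mem_filter.1 hIJ).1).2.2.1
  · rw [endpoints, card_image_fst (mem_antichainsIn.1 (mem_filter.1 hA).1).2]

theorem sizeGF_antichainsIn_eq_sum_endpointPairs :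
    sizeGF (antichainsIn a b) = ∑ IJ ∈ endpointPairs a b, X ^ #IJ.1 := by
  simpa using sizeGF_filter_eq_sum_endpointPairs (a := a) (b := b) (fun _ => True) (fun _ => True)
    fun _ _ => Iff.rfl

end Endpoints

section Cuts

-- No interval of `A` contains both `q` and `q + 1`.
def IsCut (A : Finset (ℕ × ℕ)) (q : ℕ) : Prop := ∀ x ∈ A, x.2 ≤ q ∨ q < x.1

def Connected (p : ℕ) (A : Finset (ℕ × ℕ)) : Prop := ∀ r, 1 ≤ r → r < p → ¬IsCut A r

noncomputable def firstCut (A : Finset (ℕ × ℕ)) : ℕ := sInf {q | 1 ≤ q ∧ IsCut A q}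

def lowerPart (p : ℕ) (A : Finset (ℕ × ℕ)) : Finset (ℕ × ℕ) := A.filter (·.2 ≤ p)

def upperPart (p : ℕ) (A : Finset (ℕ × ℕ)) : Finset (ℕ × ℕ) := A.filter (p < ·.1)

variable {A B C : Finset (ℕ × ℕ)} {a b p q : ℕ}

theorem not_isCut_iff : ¬IsCut A q ↔ ∃ x ∈ A, x.1 ≤ q ∧ q < x.2 := by
  simp only [IsCut, not_forall, not_or, not_le, not_lt, exists_prop, and_comm]

theorem isCut_of_subset_roots (hA : A ⊆ roots a b) (hq : b ≤ q) : IsCut A q :=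
  fun _ hx => Or.inl ((mem_roots.1 (hA hx)).2.2.trans hq)

theorem firstCut_eq_iff (h : ∃ q, 1 ≤ q ∧ IsCut A q) :
    firstCut A = p ↔ 1 ≤ p ∧ IsCut A p ∧ Connected p A := by
  obtain ⟨h1, h2⟩ : 1 ≤ firstCut A ∧ IsCut A (firstCut A) := Nat.sInf_mem h
  constructor
  · rintro rfl
    exact ⟨h1, h2, fun r hr hrp hcut => Nat.notMem_of_lt_sInf hrp ⟨hr, hcut⟩⟩
  · rintro ⟨hp, hcut, hconn⟩
    exact le_antisymm (Nat.sInf_le ⟨hp, hcut⟩) (not_lt.1 fun hlt => hconn _ h1 hlt h2)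

theorem firstCut_spec (hA : A ⊆ roots a b) :
    1 ≤ firstCut A ∧ IsCut A (firstCut A) ∧ Connected (firstCut A) A :=
  (firstCut_eq_iff ⟨b + 1, by omega, isCut_of_subset_roots hA (by omega)⟩).1 rfl

theorem firstCut_le (hA : A ⊆ roots a b) : firstCut A ≤ max b 1 :=
  Nat.sInf_le ⟨le_max_right _ _, isCut_of_subset_roots hA (le_max_left _ _)⟩

theorem lowerPart_union_upperPart (h : IsCut A p) : lowerPart p A ∪ upperPart p A = A := by
  rw [lowerPart, upperPart, ← filter_or]
  exact filter_true_of_mem h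

theorem disjoint_lowerPart_upperPart (hA : A ⊆ roots a b) :
    Disjoint (lowerPart p A) (upperPart p A) :=
  disjoint_filter.2 fun x hx h1 h2 => by have := mem_roots.1 (hA hx); omega

theorem lowerPart_mem (hA : A ∈ antichainsIn a b) : lowerPart p A ∈ antichainsIn a p := by
  obtain ⟨hAr, hAc⟩ := mem_antichainsIn.1 hA
  refine mem_antichainsIn.2 ⟨fun x hx => ?_, hAc.subset (coe_subset.2 (filter_subset _ _))⟩
  obtain ⟨hxA, hxp⟩ := mem_filter.1 hx
  have := mem_roots.1 (hAr hxA)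
  exact mem_roots.2 (by omega)

theorem upperPart_mem (hA : A ∈ antichainsIn a b) : upperPart p A ∈ antichainsIn (p + 1) b := by
  obtain ⟨hAr, hAc⟩ := mem_antichainsIn.1 hA
  refine mem_antichainsIn.2 ⟨fun x hx => ?_, hAc.subset (coe_subset.2 (filter_subset _ _))⟩
  obtain ⟨hxA, hxp⟩ := mem_filter.1 hx
  have := mem_roots.1 (hAr hxA)
  exact mem_roots.2 (by omega)

theorem lowerPart_union (hB : B ⊆ roots a p) (hC : C ⊆ roots (p + 1) b) :
    lowerPart p (B ∪ C) = B := by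
  rw [lowerPart, filter_union, filter_true_of_mem fun x hx => (mem_roots.1 (hB hx)).2.2,
    filter_false_of_mem fun x hx => by have := mem_roots.1 (hC hx); omega, union_empty]

theorem upperPart_union (hB : B ⊆ roots a p) (hC : C ⊆ roots (p + 1) b) :
    upperPart p (B ∪ C) = C := by
  rw [upperPart, filter_union,
    filter_false_of_mem fun x hx => by have := mem_roots.1 (hB hx); omega,
    filter_true_of_mem fun x hx => by have := mem_roots.1 (hC hx); omega, empty_union]

theorem isCut_union (hB : B ⊆ roots a p) (hC : C ⊆ roots (p + 1) b) : IsCut (B ∪ C) p := by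
  intro x hx
  rcases mem_union.1 hx with hx | hx
  · exact Or.inl (mem_roots.1 (hB hx)).2.2
  · exact Or.inr (mem_roots.1 (hC hx)).1

theorem connected_union_iff (hC : C ⊆ roots (p + 1) b) : Connected p (B ∪ C) ↔ Connected p B := by
  refine forall_congr' fun r => imp_congr_right fun _ => imp_congr_right fun hrp => not_congr ?_
  simp only [IsCut, mem_union, or_imp, forall_and]
  exact and_iff_left fun y hy => Or.inr (by have := mem_roots.1 (hC hy); omega)

theorem union_mem (hB : B ∈ antichainsIn a p) (hC : C ∈ antichainsIn (p + 1) b)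
    (hap : a ≤ p + 1) (hpb : p ≤ b) : B ∪ C ∈ antichainsIn a b := by
  obtain ⟨hBr, hBc⟩ := mem_antichainsIn.1 hB
  obtain ⟨hCr, hCc⟩ := mem_antichainsIn.1 hC
  refine mem_antichainsIn.2 ⟨union_subset (fun x hx => ?_) (fun x hx => ?_), ?_⟩
  · have := mem_roots.1 (hBr hx)
    exact mem_roots.2 (by omega)
  · have := mem_roots.1 (hCr hx)
    exact mem_roots.2 (by omega)
  rw [coe_union, isAntichain_union]
  refine ⟨hBc, hCc, fun x hx y hy _ => ?_⟩
  have := mem_roots.1 (hBr hx)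
  have := mem_roots.1 (hCr hy)
  exact ⟨fun h => by simp only [IntervalLE] at h; omega,
    fun h => by simp only [IntervalLE] at h; omega⟩

end Cuts

section Translate

def translate (k : ℕ) : ℕ × ℕ ↪ ℕ × ℕ :=
  ⟨fun x => (x.1 + k, x.2 + k), fun x y h => by simp only [Prod.ext_iff] at h ⊢; omega⟩

@[simp]
theorem translate_apply (k : ℕ) (x : ℕ × ℕ) : translate k x = (x.1 + k, x.2 + k) := rfl

variable {A : Finset (ℕ × ℕ)} {a b k : ℕ}

theorem isAntichain_map_translate :
    IsAntichain IntervalLE (A.map (translate k) : Set (ℕ × ℕ)) ↔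
      IsAntichain IntervalLE (A : Set (ℕ × ℕ)) := by
  rw [coe_map]
  exact IsAntichain.image_relEmbedding_iff (φ := ⟨translate k, by simp [IntervalLE]⟩)

theorem roots_add : roots (a + k) (b + k) = (roots a b).map (translate k) := by
  ext x
  simp only [mem_map, mem_roots, translate_apply, Prod.exists, Prod.ext_iff]
  constructor
  · intro h
    exact ⟨x.1 - k, x.2 - k, by omega, by omega, by omega⟩
  · rintro ⟨i, j, h, h1, h2⟩
    omega

theorem antichainsIn_add :
    antichainsIn (a + k) (b + k) =
      (antichainsIn a b).map (mapEmbedding (translate k)).toEmbedding := by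
  ext B
  simp only [mem_map, mem_antichainsIn, RelEmbedding.coe_toEmbedding, mapEmbedding_apply, roots_add,
    subset_map_iff]
  constructor
  · rintro ⟨⟨A, hA, rfl⟩, hBc⟩
    exact ⟨A, ⟨hA, isAntichain_map_translate.1 hBc⟩, rfl⟩
  · rintro ⟨A, ⟨hA, hAc⟩, rfl⟩
    exact ⟨⟨A, hA, rfl⟩, isAntichain_map_translate.2 hAc⟩

theorem covers_map_translate : Covers (a + k) (b + k) (A.map (translate k)) ↔ Covers a b A := by
  simp only [Covers, mem_map, translate_apply, exists_exists_and_eq_and]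
  constructor
  · intro h m ha hb
    obtain ⟨x, hx, h1, h2⟩ := h (m + k) (by omega) (by omega)
    exact ⟨x, hx, by omega, by omega⟩
  · intro h m ha hb
    obtain ⟨x, hx, h1, h2⟩ := h (m - k) (by omega) (by omega)
    exact ⟨x, hx, by omega, by omega⟩

theorem fullAntichainsIn_add :
    fullAntichainsIn (a + k) (b + k) =
      (fullAntichainsIn a b).map (mapEmbedding (translate k)).toEmbedding := by
  simp only [fullAntichainsIn, antichainsIn_add, filter_map]
  congr 1
  refine filter_congr fun A _ => ?_
  simp only [Function.comp_apply, RelEmbedding.coe_toEmbedding, mapEmbedding_apply,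
    covers_map_translate, NoSimple, forall_mem_map, translate_apply, ne_eq, add_left_inj]

theorem sizeGF_map_translate (S : Finset (Finset (ℕ × ℕ))) :
    sizeGF (S.map (mapEmbedding (translate k)).toEmbedding) = sizeGF S := by
  simp only [sizeGF, sum_map, RelEmbedding.coe_toEmbedding, mapEmbedding_apply, card_map]

end Translate

noncomputable def cat (n : ℕ) : ℚ[X] := sizeGF (antichainsIn 1 n)

noncomputable def catPP (n : ℕ) : ℚ[X] := sizeGF (fullAntichainsIn 1 n)

noncomputable def catConn (p : ℕ) : ℚ[X] := sizeGF ((antichainsIn 1 p).filter (Connected p))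

section FirstCut

variable {S : Finset (Finset (ℕ × ℕ))} {n p : ℕ}

theorem sizeGF_filter_firstCut (hp : 1 ≤ p) (hpn : p ≤ n) (Q : Finset (ℕ × ℕ) → Prop)
    [DecidablePred Q] :
    sizeGF ((antichainsIn 1 n).filter fun A => firstCut A = p ∧ Q (upperPart p A)) =
      catConn p * sizeGF ((antichainsIn (p + 1) n).filter Q) := by
  rw [catConn, sizeGF, sizeGF, sizeGF, sum_mul_sum, ← sum_product']
  refine sum_nbij' (fun A => (lowerPart p A, upperPart p A)) (fun BC => BC.1 ∪ BC.2)
    (fun A hA => ?_) (fun BC hBC => ?_) (fun A hA => ?_) (fun BC hBC => ?_) (fun A hA => ?_)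
  · obtain ⟨hA, hfc, hQ⟩ := mem_filter.1 hA
    have hAr := (mem_antichainsIn.1 hA).1
    obtain ⟨-, hcut, hconn⟩ := hfc ▸ firstCut_spec hAr
    have hup := upperPart_mem (p := p) hA
    rw [← lowerPart_union_upperPart hcut, connected_union_iff (mem_antichainsIn.1 hup).1] at hconn
    exact mem_product.2 ⟨mem_filter.2 ⟨lowerPart_mem hA, hconn⟩, mem_filter.2 ⟨hup, hQ⟩⟩
  · obtain ⟨hB, hC⟩ := mem_product.1 hBC
    obtain ⟨hB, hconn⟩ := mem_filter.1 hB
    obtain ⟨hC, hQ⟩ := mem_filter.1 hC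
    have hBr := (mem_antichainsIn.1 hB).1
    have hCr := (mem_antichainsIn.1 hC).1
    refine mem_filter.2 ⟨union_mem hB hC (by omega) hpn, ?_, by rwa [upperPart_union hBr hCr]⟩
    exact (firstCut_eq_iff ⟨p, hp, isCut_union hBr hCr⟩).2
      ⟨hp, isCut_union hBr hCr, (connected_union_iff hCr).2 hconn⟩
  · obtain ⟨hA, hfc, -⟩ := mem_filter.1 hA
    exact lowerPart_union_upperPart (hfc ▸ firstCut_spec (mem_antichainsIn.1 hA).1).2.1
  · obtain ⟨hB, hC⟩ := mem_product.1 hBC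
    have hBr := (mem_antichainsIn.1 (mem_filter.1 hB).1).1
    have hCr := (mem_antichainsIn.1 (mem_filter.1 hC).1).1
    exact Prod.ext (lowerPart_union hBr hCr) (upperPart_union hBr hCr)
  · obtain ⟨hA, hfc, -⟩ := mem_filter.1 hA
    have hAr := (mem_antichainsIn.1 hA).1
    rw [← pow_add, ← card_union_of_disjoint (disjoint_lowerPart_upperPart hAr),
      lowerPart_union_upperPart (hfc ▸ firstCut_spec hAr).2.1]

theorem sizeGF_eq_sum_antidiagonal (hS : S ⊆ antichainsIn 1 (n + 1)) :
    sizeGF S = ∑ ij ∈ antidiagonal n, sizeGF (S.filter fun A => firstCut A = ij.1 + 1) := by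
  have hfc : ∀ A ∈ S, 1 ≤ firstCut A ∧ firstCut A ≤ n + 1 := fun A hA =>
    have hAr := (mem_antichainsIn.1 (hS hA)).1
    ⟨(firstCut_spec hAr).1, by simpa using firstCut_le hAr⟩
  have hmaps : ∀ A ∈ S, (firstCut A - 1, n + 1 - firstCut A) ∈ antidiagonal n := fun A hA => by
    have := hfc A hA
    rw [HasAntidiagonal.mem_antidiagonal]
    omega
  rw [sizeGF, ← sum_fiberwise_of_maps_to hmaps]
  refine sum_congr rfl fun ij hij => congrArg sizeGF (filter_congr fun A hA => ?_)
  have := hfc A hA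
  rw [HasAntidiagonal.mem_antidiagonal] at hij
  rw [Prod.ext_iff]
  omega

theorem sizeGF_antichainsIn_filter_firstCut (hp : 1 ≤ p) (hpn : p ≤ n) :
    sizeGF ((antichainsIn 1 n).filter fun A => firstCut A = p) =
      catConn p * sizeGF (antichainsIn (p + 1) n) := by
  simpa using sizeGF_filter_firstCut hp hpn fun _ => True

end FirstCut

section Connected

def ConnectedPair (p : ℕ) (IJ : Finset ℕ × Finset ℕ) : Prop :=
  ∀ r, 1 ≤ r → r < p → countBelow IJ.2 (r + 1) < countBelow IJ.1 (r + 1)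

noncomputable def connectedPairs (p : ℕ) : Finset (Finset ℕ × Finset ℕ) :=
  (endpointPairs 1 p).filter (ConnectedPair p)

variable {A : Finset (ℕ × ℕ)} {I J : Finset ℕ} {a b p : ℕ}

theorem not_isCut_iff_countBelow_lt (hA : A ∈ antichainsIn a b) (r : ℕ) :
    ¬IsCut A r ↔ countBelow (A.image Prod.snd) (r + 1) < countBelow (A.image Prod.fst) (r + 1) := by
  obtain ⟨hAr, hAc⟩ := mem_antichainsIn.1 hA
  have hr := fun x (hx : x ∈ A) => mem_roots.1 (hAr hx)
  rw [countBelow_image_fst hAc, countBelow_image_snd hAc, not_isCut_iff]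
  constructor
  · rintro ⟨x, hx, h1, h2⟩
    refine card_lt_card ((ssubset_iff_of_subset (monotone_filter_right A fun y hy h => ?_)).2
      ⟨x, mem_filter.2 ⟨hx, by omega⟩, fun h => by have := (mem_filter.1 h).2; omega⟩)
    have := hr y hy
    omega
  · intro hlt
    by_contra hno
    push Not at hno
    refine hlt.ne (congrArg card (filter_congr fun y hy => ?_))
    have := hr y hy
    have := hno y hy
    omega

theorem connected_iff_connectedPair (hA : A ∈ antichainsIn a b) :
    Connected p A ↔ ConnectedPair p (endpoints A) := by
  simp only [Connected, ConnectedPair, endpoints, not_isCut_iff_countBelow_lt hA]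

theorem extremes_of_mem_connectedPairs (h : (I, J) ∈ connectedPairs (p + 2)) :
    1 ∈ I ∧ 1 ∉ J ∧ p + 2 ∈ J ∧ p + 2 ∉ I := by
  obtain ⟨h, hc⟩ := mem_filter.1 h
  obtain ⟨hI, hJ, hcard, -⟩ := mem_endpointPairs.1 h
  have h1 : countBelow J (1 + 1) < countBelow I (1 + 1) := hc 1 le_rfl (by omega)
  have h2 : countBelow J (p + 2) < countBelow I (p + 2) := hc (p + 1) (by omega) (by omega)
  rw [countBelow_succ (r := 1), countBelow_succ (r := 1), countBelow_eq_zero hI le_rfl,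
    countBelow_eq_zero hJ le_rfl] at h1
  have e1 := countBelow_eq_card hI (show p + 2 < p + 2 + 1 by omega)
  have e2 := countBelow_eq_card hJ (show p + 2 < p + 2 + 1 by omega)
  rw [countBelow_succ] at e1 e2
  split_ifs at h1 e1 e2 <;> first | omega | exact ⟨‹_›, ‹_›, ‹_›, ‹_›⟩

theorem insert_mem_connectedPairs_iff (hI : I ⊆ Icc 2 (p + 1)) (hJ : J ⊆ Icc 2 (p + 1)) :
    (insert 1 I, insert (p + 2) J) ∈ connectedPairs (p + 2) ↔ (I, J) ∈ endpointPairs 2 (p + 1) := by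
  have h1I : 1 ∉ I := fun h => by have := mem_Icc.1 (hI h); omega
  have hpJ : p + 2 ∉ J := fun h => by have := mem_Icc.1 (hJ h); omega
  have hsubI : insert 1 I ⊆ Icc 1 (p + 2) :=
    insert_subset (by simp) (hI.trans (Icc_subset_Icc (by omega) (by omega)))
  have hsubJ : insert (p + 2) J ⊆ Icc 1 (p + 2) :=
    insert_subset (by simp) (hJ.trans (Icc_subset_Icc (by omega) (by omega)))
  simp only [connectedPairs, mem_filter, mem_endpointPairs, hsubI, hsubJ, hI, hJ,
    card_insert_of_notMem h1I,
    card_insert_of_notMem hpJ, Dominates, ConnectedPair, countBelow_insert h1I,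
    countBelow_insert hpJ, add_left_inj, true_and]
  constructor
  · rintro ⟨⟨hcard, -⟩, hc⟩
    refine ⟨hcard, fun r => ?_⟩
    rcases Nat.lt_or_ge r 2 with hr | hr
    · rw [countBelow_eq_zero hJ hr.le]
      exact Nat.zero_le _
    rcases Nat.lt_or_ge (p + 2) r with hr' | hr'
    · rw [countBelow_eq_card hI (by omega), countBelow_eq_card hJ (by omega), hcard]
    obtain ⟨s, rfl⟩ : ∃ s, r = s + 1 := ⟨r - 1, by omega⟩
    have := hc s (by omega) (by omega)
    split_ifs at this <;> omega
  · rintro ⟨hcard, hdom⟩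
    refine ⟨⟨hcard, fun r => ?_⟩, fun r hr hrp => ?_⟩
    · have := hdom r
      split_ifs <;> omega
    · have := hdom (r + 1)
      split_ifs <;> omega

theorem sum_connectedPairs (p : ℕ) :
    ∑ IJ ∈ connectedPairs (p + 2), (X : ℚ[X]) ^ #IJ.1 =
      X * ∑ IJ ∈ endpointPairs 2 (p + 1), X ^ #IJ.1 := by
  rw [mul_sum]
  refine sum_nbij' (fun IJ => (IJ.1.erase 1, IJ.2.erase (p + 2)))
    (fun IJ => (insert 1 IJ.1, insert (p + 2) IJ.2)) ?_ ?_ ?_ ?_ ?_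
  · rintro ⟨I, J⟩ h
    obtain ⟨h1I, h1J, hpJ, hpI⟩ := extremes_of_mem_connectedPairs h
    obtain ⟨hI, hJ, -⟩ := mem_endpointPairs.1 (mem_filter.1 h).1
    refine (insert_mem_connectedPairs_iff (fun i hi => ?_) (fun j hj => ?_)).1 ?_
    · obtain ⟨hi1, hi⟩ := mem_erase.1 hi
      have := mem_Icc.1 (hI hi)
      have : i ≠ p + 2 := fun h => hpI (h ▸ hi)
      exact mem_Icc.2 (by omega)
    · obtain ⟨hjp, hj⟩ := mem_erase.1 hj
      have := mem_Icc.1 (hJ hj)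
      have : j ≠ 1 := fun h => h1J (h ▸ hj)
      exact mem_Icc.2 (by omega)
    · rwa [insert_erase h1I, insert_erase hpJ]
  · rintro ⟨I, J⟩ h
    obtain ⟨hI, hJ, -⟩ := mem_endpointPairs.1 h
    exact (insert_mem_connectedPairs_iff hI hJ).2 h
  · rintro ⟨I, J⟩ h
    obtain ⟨h1I, -, hpJ, -⟩ := extremes_of_mem_connectedPairs h
    exact Prod.ext (insert_erase h1I) (insert_erase hpJ)
  · rintro ⟨I, J⟩ h
    obtain ⟨hI, hJ, -⟩ := mem_endpointPairs.1 h
    exact Prod.ext (erase_insert fun h => by have := mem_Icc.1 (hI h); omega)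
      (erase_insert fun h => by have := mem_Icc.1 (hJ h); omega)
  · rintro ⟨I, J⟩ h
    rw [← card_erase_add_one (extremes_of_mem_connectedPairs h).1, pow_succ', mul_comm]

end Connected

theorem catConn_add_two (p : ℕ) : catConn (p + 2) = X * cat p := by
  rw [catConn, sizeGF_filter_eq_sum_endpointPairs _ _ fun A hA => connected_iff_connectedPair hA,
    ← connectedPairs, sum_connectedPairs, cat, ← sizeGF_map_translate (k := 1),
    ← antichainsIn_add, sizeGF_antichainsIn_eq_sum_endpointPairs]

theorem catConn_one : catConn 1 = 1 + X := by
  have hroots : roots 1 1 = {(1, 1)} := by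
    ext x
    rw [mem_roots, mem_singleton, Prod.ext_iff]
    omega
  have hK : (antichainsIn 1 1).filter (Connected 1) = {∅, {(1, 1)}} := by
    rw [filter_true_of_mem fun A _ r hr hr1 => absurd hr1 (by omega)]
    ext A
    rw [mem_antichainsIn, hroots, mem_insert, mem_singleton, ← subset_singleton_iff]
    exact and_iff_left_of_imp fun hA =>
      (Set.subsingleton_singleton.anti ((coe_subset.2 hA).trans (coe_singleton _).le)).isAntichain _
  rw [catConn, hK, sizeGF, sum_pair (singleton_ne_empty _).symm, card_empty, card_singleton,
    pow_zero, pow_one]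

section Full

variable {A B C : Finset (ℕ × ℕ)} {a b n p : ℕ}

theorem Connected.noSimple (hB : B ∈ antichainsIn 1 p) (hp : 2 ≤ p) (hconn : Connected p B) :
    NoSimple B := by
  obtain ⟨hBr, hBc⟩ := mem_antichainsIn.1 hB
  intro x hx hxx
  have := mem_roots.1 (hBr hx)
  -- an interval crossing the gap at `min x.1 (p - 1)` contains `x`
  obtain ⟨y, hy, h1, h2⟩ := not_isCut_iff.1 (hconn (min x.1 (p - 1)) (by omega) (by omega))
  have := mem_roots.1 (hBr hy)
  exact hBc (mem_coe.2 hx) (mem_coe.2 hy) (by rintro rfl; omega) ⟨by omega, by omega⟩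

theorem Connected.covers (hB : B ⊆ roots 1 p) (hp : 2 ≤ p) (hconn : Connected p B) :
    Covers 1 p B := by
  intro m hm hmp
  obtain ⟨y, hy, h1, h2⟩ := not_isCut_iff.1 (hconn (min m (p - 1)) (by omega) (by omega))
  have := mem_roots.1 (hB hy)
  exact ⟨y, hy, by omega, by omega⟩

theorem noSimple_union : NoSimple (B ∪ C) ↔ NoSimple B ∧ NoSimple C := by
  simp only [NoSimple, mem_union, or_imp, forall_and]

theorem covers_union_iff (hB : B ⊆ roots a p) (hC : C ⊆ roots (p + 1) b) (hap : a ≤ p + 1)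
    (hpb : p ≤ b) : Covers a b (B ∪ C) ↔ Covers a p B ∧ Covers (p + 1) b C := by
  constructor
  · intro h
    refine ⟨fun m h1 h2 => ?_, fun m h1 h2 => ?_⟩
    · obtain ⟨x, hx, hx1, hx2⟩ := h m h1 (by omega)
      rcases mem_union.1 hx with hx | hx
      · exact ⟨x, hx, hx1, hx2⟩
      · have := mem_roots.1 (hC hx)
        omega
    · obtain ⟨x, hx, hx1, hx2⟩ := h m (by omega) h2
      rcases mem_union.1 hx with hx | hx
      · have := mem_roots.1 (hB hx)
        omega
      · exact ⟨x, hx, hx1, hx2⟩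
  · rintro ⟨hBc, hCc⟩ m h1 h2
    rcases le_or_gt m p with hm | hm
    · obtain ⟨x, hx, hx'⟩ := hBc m h1 hm
      exact ⟨x, mem_union_left _ hx, hx'⟩
    · obtain ⟨x, hx, hx'⟩ := hCc m hm h2
      exact ⟨x, mem_union_right _ hx, hx'⟩

theorem not_noSimple_and_covers (hA : A ⊆ roots 1 n) (hn : 1 ≤ n) (hcut : IsCut A 1) :
    ¬(NoSimple A ∧ Covers 1 n A) := by
  rintro ⟨hns, hcov⟩
  obtain ⟨x, hx, h1, h2⟩ := hcov 1 le_rfl hn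
  have := mem_roots.1 (hA hx)
  have := hcut x hx
  exact hns x hx (by omega)

theorem noSimple_and_covers_iff (hA : A ∈ antichainsIn 1 n) (hfc : firstCut A = p)
    (hp : 2 ≤ p) :
    NoSimple A ∧ Covers 1 n A ↔ NoSimple (upperPart p A) ∧ Covers (p + 1) n (upperPart p A) := by
  have hAr := (mem_antichainsIn.1 hA).1
  obtain ⟨-, hcut, hconn⟩ := hfc ▸ firstCut_spec hAr
  have hB := lowerPart_mem (p := p) hA
  have hCr := (mem_antichainsIn.1 (upperPart_mem (p := p) hA)).1
  rw [← lowerPart_union_upperPart hcut, connected_union_iff hCr] at hconn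
  have hpn : p ≤ n := by have := hfc ▸ firstCut_le hAr; omega
  have := hconn.noSimple hB hp
  have := hconn.covers (mem_antichainsIn.1 hB).1 hp
  conv_lhs => rw [← lowerPart_union_upperPart hcut]
  rw [noSimple_union, covers_union_iff (mem_antichainsIn.1 hB).1 hCr (by omega) hpn]
  tauto

end Full

section Recurrences

variable {n p : ℕ}

theorem antichainsIn_one_zero : antichainsIn 1 0 = {∅} := by
  ext A
  rw [mem_antichainsIn, mem_singleton]
  constructor
  · rintro ⟨hA, -⟩
    exact subset_empty.1 fun x hx => by have := mem_roots.1 (hA hx); omega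
  · rintro rfl
    exact ⟨empty_subset _, by simp⟩

theorem cat_zero : cat 0 = 1 := by
  rw [cat, antichainsIn_one_zero, sizeGF, sum_singleton, card_empty, pow_zero]

theorem catPP_zero : catPP 0 = 1 := by
  rw [catPP, fullAntichainsIn, antichainsIn_one_zero, filter_singleton,
    if_pos ⟨fun x hx => absurd hx (notMem_empty x), fun m h1 h2 => absurd h2 (by omega)⟩,
    sizeGF, sum_singleton, card_empty, pow_zero]

theorem cat_succ (n : ℕ) :
    cat (n + 1) = ∑ ij ∈ antidiagonal n, catConn (ij.1 + 1) * cat ij.2 := by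
  rw [cat, sizeGF_eq_sum_antidiagonal subset_rfl]
  refine sum_congr rfl fun ij hij => ?_
  rw [HasAntidiagonal.mem_antidiagonal] at hij
  rw [sizeGF_antichainsIn_filter_firstCut (by omega) (by omega), cat,
    ← sizeGF_map_translate (k := ij.1 + 1) (antichainsIn 1 ij.2), ← antichainsIn_add]
  congr 3 <;> omega

theorem cat_one : cat 1 = 1 + X := by
  rw [cat_succ, Nat.antidiagonal_zero, sum_singleton, catConn_one, cat_zero, mul_one]

theorem cat_add_two (n : ℕ) :
    cat (n + 2) = (1 + X) * cat (n + 1) + ∑ ij ∈ antidiagonal n, X * cat ij.1 * cat ij.2 := by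
  rw [cat_succ, Nat.sum_antidiagonal_succ, zero_add, catConn_one]
  simp only [catConn_add_two]

theorem sizeGF_fullAntichainsIn_filter_firstCut_one (hn : 1 ≤ n) :
    sizeGF ((fullAntichainsIn 1 n).filter fun A => firstCut A = 1) = 0 := by
  rw [filter_eq_empty_iff.2 fun A hA hfc => ?_, sizeGF, sum_empty]
  obtain ⟨hA, hfull⟩ := mem_filter.1 hA
  have hAr := (mem_antichainsIn.1 hA).1
  exact not_noSimple_and_covers hAr hn (hfc ▸ (firstCut_spec hAr).2.1) hfull

theorem sizeGF_fullAntichainsIn_filter_firstCut (hp : 2 ≤ p) (hpn : p ≤ n) :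
    sizeGF ((fullAntichainsIn 1 n).filter fun A => firstCut A = p) =
      catConn p * sizeGF (fullAntichainsIn (p + 1) n) := by
  simp only [fullAntichainsIn, filter_filter]
  rw [← sizeGF_filter_firstCut (by omega) hpn]
  refine congrArg sizeGF (filter_congr fun A hA => ?_)
  constructor
  · rintro ⟨hfull, hfc⟩
    exact ⟨hfc, (noSimple_and_covers_iff hA hfc hp).1 hfull⟩
  · rintro ⟨hfc, h⟩
    exact ⟨(noSimple_and_covers_iff hA hfc hp).2 h, hfc⟩

theorem catPP_one : catPP 1 = 0 := by
  rw [catPP, sizeGF_eq_sum_antidiagonal fullAntichainsIn_subset, Nat.antidiagonal_zero,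
    sum_singleton, zero_add, sizeGF_fullAntichainsIn_filter_firstCut_one le_rfl]

theorem catPP_add_two (n : ℕ) :
    catPP (n + 2) = ∑ ij ∈ antidiagonal n, X * cat ij.1 * catPP ij.2 := by
  rw [catPP, sizeGF_eq_sum_antidiagonal fullAntichainsIn_subset, Nat.sum_antidiagonal_succ,
    zero_add, sizeGF_fullAntichainsIn_filter_firstCut_one (by omega), zero_add]
  refine sum_congr rfl fun ij hij => ?_
  rw [HasAntidiagonal.mem_antidiagonal] at hij
  rw [sizeGF_fullAntichainsIn_filter_firstCut (by omega) (by omega), catConn_add_two, catPP,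
    ← sizeGF_map_translate (k := ij.1 + 2) (fullAntichainsIn 1 ij.2),
    ← fullAntichainsIn_add]
  congr 3 <;> omega

theorem X_mul_cat (m : ℕ) : X * cat m = (1 + X) * catPP (m + 1) + X * catPP m := by
  induction m using Nat.strong_induction_on with
  | _ m ih =>
    match m, ih with
    | 0, _ => rw [cat_zero, catPP_one, catPP_zero]; ring
    | 1, _ =>
      rw [cat_one, catPP_add_two, catPP_one, Nat.antidiagonal_zero, sum_singleton, cat_zero,
        catPP_zero]
      ring
    | k + 2, ih =>
      have hrec : ∀ ij ∈ antidiagonal k, X * (X * cat ij.1 * cat ij.2) =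
          (1 + X) * (X * cat ij.1 * catPP (ij.2 + 1)) + X * (X * cat ij.1 * catPP ij.2) :=
        fun ij hij => by
          rw [HasAntidiagonal.mem_antidiagonal] at hij
          linear_combination X * cat ij.1 * ih ij.2 (by omega)
      rw [show k + 2 + 1 = k + 1 + 2 from rfl, cat_add_two, catPP_add_two (k + 1),
        catPP_add_two k, Nat.sum_antidiagonal_succ', catPP_zero, mul_add X, mul_sum,
        sum_congr rfl hrec, sum_add_distrib, ← mul_sum, ← mul_sum]
      ring

end Recurrences

instance (n : ℕ) : Fintype (ARoot n) := Fintype.subtype (roots 1 n) fun _ => mem_roots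

def rootEmbedding (n : ℕ) : aLe n ↪r IntervalLE := ⟨Function.Embedding.subtype _, Iff.rfl⟩

theorem isAntichain_map_rootEmbedding {n : ℕ} {A : Finset (ARoot n)} :
    IsAntichain IntervalLE (A.map (rootEmbedding n).toEmbedding : Set (ℕ × ℕ)) ↔
      IsAntichain (aLe n) (A : Set (ARoot n)) := by
  rw [coe_map]
  exact IsAntichain.image_relEmbedding_iff

theorem finsum_eq_sizeGF (n : ℕ) (P : Finset (ℕ × ℕ) → Prop) [DecidablePred P] :
    ∑ᶠ A ∈ {A : Finset (ARoot n) | P (A.map (rootEmbedding n).toEmbedding)}, (X : ℚ[X]) ^ #A =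
      sizeGF ((roots 1 n).powerset.filter P) := by
  rw [finsum_mem_eq_finite_toFinset_sum _ (Set.toFinite _)]
  refine sum_nbij' (fun A => A.map (rootEmbedding n).toEmbedding)
    (fun B => (B.subtype fun x : ℕ × ℕ => 1 ≤ x.1 ∧ x.1 ≤ x.2 ∧ x.2 ≤ n : Finset (ARoot n)))
    (fun A hA => ?_) (fun B hB => ?_)
    (fun A _ => ?_) (fun B hB => ?_) (fun A _ => ?_)
  · rw [Set.Finite.mem_toFinset, Set.mem_ofPred_eq] at hA
    refine mem_filter.2 ⟨mem_powerset.2 fun x hx => ?_, hA⟩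
    obtain ⟨y, -, rfl⟩ := mem_map.1 hx
    exact mem_roots.2 y.2
  · obtain ⟨hB, hP⟩ := mem_filter.1 hB
    exact (Set.Finite.mem_toFinset _).2 <| (congrArg P <|
      subtype_map_of_mem fun x hx => mem_roots.1 (mem_powerset.1 hB hx)).mpr hP
  · ext x
    rw [mem_subtype]
    exact mem_map' (rootEmbedding n).toEmbedding
  · exact subtype_map_of_mem fun x hx => mem_roots.1 (mem_powerset.1 (mem_filter.1 hB).1 hx)
  · rw [card_map]

theorem catA_eq_cat (n : ℕ) : CatA n = cat n := by
  have h : {A : Finset (ARoot n) | IsAntichain (aLe n) (A : Set (ARoot n))} =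
      {A | IsAntichain IntervalLE (A.map (rootEmbedding n).toEmbedding : Set (ℕ × ℕ))} := by
    ext A
    exact isAntichain_map_rootEmbedding.symm
  rw [CatA, h, finsum_eq_sizeGF n fun B => IsAntichain IntervalLE (B : Set (ℕ × ℕ))]
  rfl

theorem catppA_eq_catPP (n : ℕ) : CatppA n = catPP n := by
  have h : {A : Finset (ARoot n) | IsAntichain (aLe n) (A : Set (ARoot n)) ∧
      (∀ x ∈ A, ¬aSimple n x) ∧ aFullSupport n A} =
      {A | IsAntichain IntervalLE (A.map (rootEmbedding n).toEmbedding : Set (ℕ × ℕ)) ∧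
        NoSimple (A.map (rootEmbedding n).toEmbedding) ∧
        Covers 1 n (A.map (rootEmbedding n).toEmbedding)} := by
    ext A
    refine and_congr isAntichain_map_rootEmbedding.symm (and_congr ?_ ?_)
    · rw [NoSimple, forall_mem_map]
      rfl
    · simp only [Covers, aFullSupport, mem_map, exists_exists_and_eq_and]
      rfl
  rw [CatppA, h, finsum_eq_sizeGF n fun B => IsAntichain IntervalLE (B : Set (ℕ × ℕ)) ∧
    NoSimple B ∧ Covers 1 n B, catPP, fullAntichainsIn, antichainsIn, filter_filter]

end TypeA

/-- The identity `(1+q)·Cat⁺⁺(Aₙ; q) + q·Cat⁺⁺(Aₙ₋₁; q) = q·Cat(Aₙ₋₁; q)`. -/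
theorem catppA_identity (n : ℕ) (hn : 1 ≤ n) :
    (1 + X) * CatppA n + X * CatppA (n - 1) = X * CatA (n - 1) := by
  obtain ⟨m, rfl⟩ := Nat.exists_eq_add_of_le' hn
  rw [TypeA.catppA_eq_catPP, TypeA.catppA_eq_catPP, TypeA.catA_eq_cat, Nat.add_sub_cancel,
    TypeA.X_mul_cat]
end

section
/- For every integer n ≥ 0, the polynomial identity Cat(A_n; q) = Cat⁺⁺(A_n; q) + (1+q)·Σ_{i=0}^{n−1} Cat⁺⁺(A_i; q)·Cat(A_{n−i−1}; q) holds. -/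
open Polynomial

/-!
Say that a set `A` of roots of `Aₙ` splits at `q` if every root of `A` containing `q` is the
simple root `{q}`. An antichain is counted by `Cat⁺⁺(Aₙ)` exactly when it splits nowhere in
`[1, n]`, because a simple root `{q}` in an antichain is the only root of it containing `q`.
Otherwise let `q = i + 1` be its first split. Its roots then lie either in `[1, i]`, or in
`[i + 2, n]`, or equal `{i + 1}`. So it is the disjoint union of an antichain of `Aᵢ` that splits
nowhere in `[1, i]`, an arbitrary antichain of `Aₙ₋ᵢ₋₁` shifted by `i + 1`, and possibly
`{i + 1}`. Conversely, every such triple glues to an antichain whose first split is `i + 1`, so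
that fibre contributes `(1 + q) Cat⁺⁺(Aᵢ) Cat(Aₙ₋ᵢ₋₁)`.
-/
open Finset

namespace ARoot

variable {m n : ℕ}

instance : DecidableEq (ARoot n) := inferInstanceAs (DecidableEq (Subtype _))

instance : Finite (ARoot n) :=
  Set.Finite.to_subtype <| (Set.finite_Icc ((0 : ℕ), (0 : ℕ)) (n, n)).subset fun _ ⟨_, h₁, h₂⟩ =>
    ⟨⟨Nat.zero_le _, Nat.zero_le _⟩, h₁.trans h₂, h₂⟩

noncomputable instance : Fintype (ARoot n) := Fintype.ofFinite _

theorem ext {x y : ARoot n} (h₁ : x.1.1 = y.1.1) (h₂ : x.1.2 = y.1.2) : x = y :=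
  Subtype.ext (Prod.ext h₁ h₂)

def simple (q : ℕ) (h₁ : 1 ≤ q) (h₂ : q ≤ n) : ARoot n := ⟨(q, q), h₁, le_rfl, h₂⟩

def shift (k : ℕ) (h : k + m ≤ n) : aLe m ↪r aLe n where
  toFun x := ⟨(x.1.1 + k, x.1.2 + k), by have := x.2; dsimp only; omega⟩
  inj' x y hxy := by
    have h₁ := congrArg (fun z : ARoot n => z.1.1) hxy
    have h₂ := congrArg (fun z : ARoot n => z.1.2) hxy
    exact ext (by simpa using h₁) (by simpa using h₂)
  map_rel_iff' := and_congr Nat.add_le_add_iff_right Nat.add_le_add_iff_right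

variable {k : ℕ} (h : k + m ≤ n) (x : ARoot m)

@[simp] theorem shift_val : (shift k h x).1 = (x.1.1 + k, x.1.2 + k) := rfl

theorem exists_shift_eq {y : ARoot n} (h₁ : k < y.1.1) (h₂ : y.1.2 ≤ k + m) :
    ∃ x, shift k h x = y :=
  ⟨⟨(y.1.1 - k, y.1.2 - k), by have := y.2; dsimp only; omega⟩,
    ext (Nat.sub_add_cancel (by omega)) (Nat.sub_add_cancel (by have := y.2; omega))⟩

end ARoot

open Classical in
noncomputable def antichains (n : ℕ) : Finset (Finset (ARoot n)) :=
  {A | IsAntichain (aLe n) (A : Set (ARoot n))}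

theorem mem_antichains {n : ℕ} {A : Finset (ARoot n)} :
    A ∈ antichains n ↔ IsAntichain (aLe n) (A : Set (ARoot n)) := by
  simp [antichains]

theorem catA_eq_sum (n : ℕ) : CatA n = ∑ A ∈ antichains n, X ^ #A := by
  rw [CatA, ← finsum_mem_coe_finset]
  congr 1
  ext A
  simp [mem_antichains]

section Splitting

variable {m n : ℕ}

def SplitsAt (A : Finset (ARoot n)) (q : ℕ) : Prop :=
  ∀ x ∈ A, x.1.1 ≤ q → q ≤ x.1.2 → x.1 = (q, q)

theorem splitsAt_of_lt (A : Finset (ARoot n)) {q : ℕ} (hq : n < q) : SplitsAt A q :=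
  fun x _ _ hx => absurd (hx.trans x.2.2.2) hq.not_ge

theorem splitsAt_union {A A' : Finset (ARoot n)} {q : ℕ} :
    SplitsAt (A ∪ A') q ↔ SplitsAt A q ∧ SplitsAt A' q :=
  forall_mem_union

theorem splitsAt_singleton_simple {p q : ℕ} (h₁ : 1 ≤ p) (h₂ : p ≤ n) :
    SplitsAt {ARoot.simple p h₁ h₂} q := by
  intro x hx hpq hqp
  rw [mem_singleton.1 hx] at hpq hqp ⊢
  exact congrArg (fun r => (r, r)) (le_antisymm hpq hqp)

theorem splitsAt_map_shift_add {k : ℕ} (h : k + m ≤ n) {B : Finset (ARoot m)} {q : ℕ} :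
    SplitsAt (B.map (ARoot.shift k h).toEmbedding) (q + k) ↔ SplitsAt B q := by
  simp [SplitsAt, Prod.ext_iff]

theorem splitsAt_map_shift_of_le {k : ℕ} (h : k + m ≤ n) (B : Finset (ARoot m)) {q : ℕ}
    (hq : q ≤ k) : SplitsAt (B.map (ARoot.shift k h).toEmbedding) q := by
  simp only [SplitsAt, forall_mem_map, RelEmbedding.coe_toEmbedding, ARoot.shift_val]
  intro x _ hx
  have := x.2.1
  omega

theorem IsAntichain.forall_not_aSimple_and_aFullSupport_iff {A : Finset (ARoot n)}
    (hA : IsAntichain (aLe n) (A : Set (ARoot n))) :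
    ((∀ x ∈ A, ¬ aSimple n x) ∧ aFullSupport n A) ↔ ∀ k < n, ¬ SplitsAt A (k + 1) := by
  refine ⟨fun ⟨hns, hfs⟩ k hk hk' => ?_, fun h => ⟨fun x hx hxs => ?_, fun q h₁ h₂ => ?_⟩⟩
  · obtain ⟨x, hx, hx₁, hx₂⟩ := hfs (k + 1) k.succ_pos hk
    exact hns x hx (by rw [aSimple, hk' x hx hx₁ hx₂])
  · unfold aSimple at hxs
    have := x.2
    refine h (x.1.1 - 1) (by omega) fun y hy hy₁ hy₂ => ?_
    rw [← hA.eq hx hy ⟨by omega, by omega⟩]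
    exact Prod.ext (by omega) (by omega)
  · by_contra! hq
    refine h (q - 1) (by omega) fun y hy hy₁ hy₂ => absurd (hq y hy (by omega)) ?_
    omega

theorem exists_splitsAt_succ (A : Finset (ARoot n)) : ∃ k, SplitsAt A (k + 1) :=
  ⟨n, splitsAt_of_lt A n.lt_succ_self⟩

open Classical in
/-- `splitIndex A + 1` is the least positive position at which `A` splits. Every `A` splits at
`n + 1`, so `splitIndex A = n` means that `A` does not split anywhere in `[1, n]`. -/
noncomputable def splitIndex (A : Finset (ARoot n)) : ℕ :=
  Nat.find (exists_splitsAt_succ A)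

variable {A : Finset (ARoot n)}

theorem splitsAt_splitIndex : SplitsAt A (splitIndex A + 1) := by
  classical exact Nat.find_spec (exists_splitsAt_succ A)

theorem splitIndex_le_of_splitsAt {k : ℕ} (hk : SplitsAt A (k + 1)) : splitIndex A ≤ k := by
  classical exact Nat.find_min' (exists_splitsAt_succ A) hk

theorem splitIndex_le : splitIndex A ≤ n :=
  splitIndex_le_of_splitsAt (splitsAt_of_lt A n.lt_succ_self)

theorem splitIndex_eq_self_iff : splitIndex A = n ↔ ∀ k < n, ¬ SplitsAt A (k + 1) := by
  classical
  exact (Nat.find_eq_iff (exists_splitsAt_succ A)).trans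
    (and_iff_right (splitsAt_of_lt A n.lt_succ_self))

theorem catppA_eq_sum (n : ℕ) :
    CatppA n = ∑ A ∈ antichains n with splitIndex A = n, X ^ #A := by
  rw [CatppA, ← finsum_mem_coe_finset]
  refine congrArg (fun s => ∑ᶠ A ∈ s, (X : ℚ[X]) ^ #A) (Set.ext fun A => ?_)
  simp only [coe_filter, mem_antichains]
  exact and_congr_right fun hA =>
    hA.forall_not_aSimple_and_aFullSupport_iff.trans splitIndex_eq_self_iff.symm

end Splitting

section Glue

variable {n i : ℕ} (h : i < n)

abbrev lowerEmb : aLe i ↪r aLe n := ARoot.shift 0 (by omega)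

abbrev upperEmb : aLe (n - i - 1) ↪r aLe n := ARoot.shift (i + 1) (by omega)

abbrev midRoot : ARoot n := ARoot.simple (i + 1) i.succ_pos h

noncomputable def lowerPart (A : Finset (ARoot n)) : Finset (ARoot i) :=
  A.preimage (lowerEmb h) (lowerEmb h).injective.injOn

noncomputable def upperPart (A : Finset (ARoot n)) : Finset (ARoot (n - i - 1)) :=
  A.preimage (upperEmb h) (upperEmb h).injective.injOn

def glue (b : Bool) (B : Finset (ARoot i)) (C : Finset (ARoot (n - i - 1))) :
    Finset (ARoot n) :=
  B.map (lowerEmb h).toEmbedding ∪ C.map (upperEmb h).toEmbedding ∪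
    if b then {midRoot h} else ∅

@[simp] theorem lowerEmb_ne_upperEmb (x : ARoot i) (y : ARoot (n - i - 1)) :
    lowerEmb h x ≠ upperEmb h y := by
  refine ne_of_apply_ne (fun z : ARoot n => z.1.1) ?_
  have := x.2
  simp only [ARoot.shift_val]
  omega

@[simp] theorem upperEmb_ne_lowerEmb (x : ARoot i) (y : ARoot (n - i - 1)) :
    upperEmb h y ≠ lowerEmb h x :=
  (lowerEmb_ne_upperEmb h x y).symm

@[simp] theorem lowerEmb_ne_midRoot (x : ARoot i) : lowerEmb h x ≠ midRoot h := by
  refine ne_of_apply_ne (fun z : ARoot n => z.1.2) ?_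
  have := x.2
  simp only [ARoot.shift_val, ARoot.simple]
  omega

@[simp] theorem upperEmb_ne_midRoot (y : ARoot (n - i - 1)) : upperEmb h y ≠ midRoot h := by
  refine ne_of_apply_ne (fun z : ARoot n => z.1.1) ?_
  have := y.2
  simp only [ARoot.shift_val, ARoot.simple]
  omega

variable {h} {b : Bool} {B : Finset (ARoot i)} {C : Finset (ARoot (n - i - 1))}

theorem mem_glue {y : ARoot n} : y ∈ glue h b B C ↔
    (b = true ∧ y = midRoot h) ∨ (∃ x ∈ B, lowerEmb h x = y) ∨ ∃ x ∈ C, upperEmb h x = y := by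
  cases b <;> simp [glue]

theorem lowerPart_glue : lowerPart h (glue h b B C) = B := by
  ext x
  simp [lowerPart, mem_glue]

theorem upperPart_glue : upperPart h (glue h b B C) = C := by
  ext x
  simp [upperPart, mem_glue]

theorem midRoot_mem_glue : midRoot h ∈ glue h b B C ↔ b = true := by
  simp [mem_glue]

theorem glue_lowerPart_upperPart {A : Finset (ARoot n)} (hA : SplitsAt A (i + 1)) :
    glue h (decide (midRoot h ∈ A)) (lowerPart h A) (upperPart h A) = A := by
  ext y
  simp only [mem_glue, lowerPart, upperPart, mem_preimage, decide_eq_true_eq]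
  refine ⟨by rintro (⟨hy, rfl⟩ | ⟨x, hx, rfl⟩ | ⟨x, hx, rfl⟩) <;> assumption, fun hy => ?_⟩
  have := y.2
  by_cases hlow : y.1.2 ≤ i
  · obtain ⟨x, hx⟩ :=
      ARoot.exists_shift_eq (k := 0) (m := i) (y := y) (by omega) (by omega) (by omega)
    exact Or.inr (Or.inl ⟨x, hx ▸ hy, hx⟩)
  by_cases hup : i + 1 < y.1.1
  · obtain ⟨x, hx⟩ := ARoot.exists_shift_eq (m := n - i - 1) (by omega) hup (by omega)
    exact Or.inr (Or.inr ⟨x, hx ▸ hy, hx⟩)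
  have hmid : y = midRoot h := Subtype.ext (hA y hy (by omega) (by omega))
  exact Or.inl ⟨hmid ▸ hy, hmid⟩

theorem splitsAt_glue {q : ℕ} (hq : q ≤ i + 1) : SplitsAt (glue h b B C) q ↔ SplitsAt B q := by
  have hmid : SplitsAt (if b then {midRoot h} else ∅ : Finset (ARoot n)) q := by
    cases b
    · exact fun x hx => absurd hx (notMem_empty x)
    · exact splitsAt_singleton_simple _ _
  simpa [glue, splitsAt_union, hmid, splitsAt_map_shift_of_le _ _ hq] using
    splitsAt_map_shift_add (k := 0) (q := q) (by omega : 0 + i ≤ n) (B := B)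

theorem splitIndex_glue : splitIndex (glue h b B C) = splitIndex B := by
  have hB : splitIndex B ≤ i := splitIndex_le
  have hle : splitIndex (glue h b B C) ≤ splitIndex B :=
    splitIndex_le_of_splitsAt ((splitsAt_glue (by omega)).2 splitsAt_splitIndex)
  exact hle.antisymm (splitIndex_le_of_splitsAt ((splitsAt_glue (by omega)).1 splitsAt_splitIndex))

theorem card_glue : #(glue h b B C) = #B + #C + b.toNat := by
  have hLU : Disjoint (B.map (lowerEmb h).toEmbedding) (C.map (upperEmb h).toEmbedding) := by
    simp [disjoint_left]
  have hM : Disjoint (B.map (lowerEmb h).toEmbedding ∪ C.map (upperEmb h).toEmbedding)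
      (if b then {midRoot h} else ∅) := by
    cases b <;> simp
  rw [glue, card_union_of_disjoint hM, card_union_of_disjoint hLU, card_map, card_map]
  cases b <;> rfl

theorem isAntichain_glue (hB : IsAntichain (aLe i) (B : Set (ARoot i)))
    (hC : IsAntichain (aLe (n - i - 1)) (C : Set (ARoot (n - i - 1)))) :
    IsAntichain (aLe n) (glue h b B C : Set (ARoot n)) := by
  intro y hy z hz hne hle
  rw [mem_coe, mem_glue] at hy hz
  -- roots from different pieces are disjoint intervals, hence incomparable
  rcases hy with ⟨-, rfl⟩ | ⟨x, hx, rfl⟩ | ⟨x, hx, rfl⟩ <;>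
    rcases hz with ⟨-, rfl⟩ | ⟨x', hx', rfl⟩ | ⟨x', hx', rfl⟩
  · exact hne rfl
  · have := x'.2; simp only [aLe, ARoot.shift_val, ARoot.simple] at hle; omega
  · have := x'.2; simp only [aLe, ARoot.shift_val, ARoot.simple] at hle; omega
  · have := x.2; simp only [aLe, ARoot.shift_val, ARoot.simple] at hle; omega
  · exact hB hx hx' (ne_of_apply_ne _ hne) ((lowerEmb h).map_rel_iff.1 hle)
  · have := x.2; simp only [aLe, ARoot.shift_val] at hle; omega
  · have := x.2; simp only [aLe, ARoot.shift_val, ARoot.simple] at hle; omega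
  · have := x'.2; simp only [aLe, ARoot.shift_val] at hle; omega
  · exact hC hx hx' (ne_of_apply_ne _ hne) ((upperEmb h).map_rel_iff.1 hle)

end Glue

theorem sum_antichains_splitIndex_eq {n i : ℕ} (h : i < n) :
    ∑ A ∈ antichains n with splitIndex A = i, (X : ℚ[X]) ^ #A =
      (1 + X) * (CatppA i * CatA (n - i - 1)) := by
  have hprod : (1 + X) * (CatppA i * CatA (n - i - 1)) =
      ∑ p ∈ (univ : Finset Bool) ×ˢ
          ({B ∈ antichains i | splitIndex B = i} ×ˢ antichains (n - i - 1)),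
        (X : ℚ[X]) ^ (#p.2.1 + #p.2.2 + p.1.toNat) := by
    simp only [catppA_eq_sum, catA_eq_sum, sum_product, Fintype.sum_bool, pow_add, ← sum_mul,
      ← mul_sum, Bool.toNat_true, Bool.toNat_false, pow_one, pow_zero]
    ring
  rw [hprod]
  symm
  refine sum_nbij' (fun p => glue h p.1 p.2.1 p.2.2)
    (fun A => (decide (midRoot h ∈ A), lowerPart h A, upperPart h A)) ?_ ?_ ?_ ?_ ?_
  · rintro ⟨b, B, C⟩ hp
    simp only [mem_product, mem_filter, mem_antichains, mem_univ, true_and] at hp ⊢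
    exact ⟨isAntichain_glue hp.1.1 hp.2, splitIndex_glue.trans hp.1.2⟩
  · intro A hA
    rw [mem_filter, mem_antichains] at hA
    have hparts := glue_lowerPart_upperPart (h := h) (hA.2 ▸ splitsAt_splitIndex)
    simp only [mem_product, mem_filter, mem_antichains, mem_univ, true_and]
    refine ⟨⟨?_, ?_⟩, ?_⟩
    · rw [lowerPart, coe_preimage]
      exact hA.1.preimage_relEmbedding _
    · rw [← splitIndex_glue (h := h) (b := decide (midRoot h ∈ A)) (C := upperPart h A), hparts,
        hA.2]
    · rw [upperPart, coe_preimage]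
      exact hA.1.preimage_relEmbedding _
  · rintro ⟨b, B, C⟩ -
    simp only [midRoot_mem_glue, lowerPart_glue, upperPart_glue, Bool.decide_eq_true]
  · intro A hA
    exact glue_lowerPart_upperPart (h := h) ((mem_filter.1 hA).2 ▸ splitsAt_splitIndex)
  · rintro ⟨b, B, C⟩ -
    rw [card_glue]

/-- The identity `Cat(Aₙ; q) = Cat⁺⁺(Aₙ; q) + (1+q)·Σᵢ₌₀ⁿ⁻¹ Cat⁺⁺(Aᵢ; q)·Cat(Aₙ₋ᵢ₋₁; q)`. -/
theorem catA_from_catppA (n : ℕ) :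
    CatA n = CatppA n + (1 + X) * ∑ i ∈ Finset.range n, CatppA i * CatA (n - i - 1) := by
  rw [catA_eq_sum, ← sum_fiberwise_of_maps_to (g := splitIndex) (t := range (n + 1))
    fun A _ => mem_range.2 (Nat.lt_succ_of_le splitIndex_le), sum_range_succ, ← catppA_eq_sum,
    add_comm, mul_sum]
  exact congrArg _ (sum_congr rfl fun i hi => sum_antichains_splitIndex_eq (mem_range.1 hi))
end
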